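/- arXiv:2503.01032 — 6 statements merged into one kernel-verified Lean document; each statement's English description precedes it below -/
import Mathlib

section
/- Let F be a forest of type t (t ∈ {0,1,2}) on n vertices with 3 dividing e(F), and let χ : E(K_{n+t}) → Z_3 be an edge-coloring with no alternating 4-cycle. Then there is a copy of F in K_{n+t} whose edge colors sum to 0 in Z_3. -/
open Finset

/-- A zero-sum (over `ZMod 3`) copy of the graph `F` in the edge-colored complete graph
on `Fin N`. -/
def HasZeroSumCopy {V : Type} [Fintype V] [DecidableEq V] {N : ℕ}
    (F : SimpleGraph V) [DecidableRel F.Adj] (χ : Sym2 (Fin N) → ZMod 3) : Prop :=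
  ∃ f : V → Fin N, Function.Injective f ∧ ∑ e ∈ F.edgeFinset, χ (e.map f) = 0

/-- `F` is a star: there is a center adjacent to all other vertices,
and every edge is incident to the center. -/
def IsStar {V : Type} (F : SimpleGraph V) : Prop :=
  ∃ c : V, (∀ v, v ≠ c → F.Adj c v) ∧ (∀ u w, F.Adj u w → u = c ∨ w = c)

/-- The type-2 condition: `F` is `1 (mod 3)`-regular or a star. -/
def TypeTwoCond {V : Type} [Fintype V] [DecidableEq V]
    (F : SimpleGraph V) [DecidableRel F.Adj] : Prop :=
  (∀ v, F.degree v % 3 = 1) ∨ IsStar F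

/-- The degree condition defining type-1 forests (among non-type-2 ones):
either no degree is divisible by 3, or exactly one vertex has degree `≡ 0 (mod 3)`
and all other vertices have degree `≡ 1 (mod 3)`. -/
def TypeOneCond {V : Type} [Fintype V] [DecidableEq V]
    (F : SimpleGraph V) [DecidableRel F.Adj] : Prop :=
  (∀ v, ¬ (3 ∣ F.degree v)) ∨
    (∃ v₀, F.degree v₀ % 3 = 0 ∧ ∀ v, v ≠ v₀ → F.degree v % 3 = 1)

/-- `F` is a forest of type `t ∈ {0, 1, 2}`. -/
def ForestOfType {V : Type} [Fintype V] [DecidableEq V]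
    (F : SimpleGraph V) [DecidableRel F.Adj] (t : ℕ) : Prop :=
  (t = 2 ∧ TypeTwoCond F) ∨
    (t = 1 ∧ ¬ TypeTwoCond F ∧ TypeOneCond F) ∨
    (t = 0 ∧ ¬ TypeTwoCond F ∧ ¬ TypeOneCond F)

open SimpleGraph in
lemma forest_bound {V : Type} [Fintype V] [DecidableEq V] {G : SimpleGraph V} [DecidableRel G.Adj]
    (hG : G.IsAcyclic) (x₀ : V) : G.edgeFinset.card + 1 ≤ Fintype.card V := by
  classical
  set root : V → V := fun x => Quot.out (G.connectedComponentMk x) with hrootdef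
  have hmk : ∀ x, G.connectedComponentMk (root x) = G.connectedComponentMk x := fun x =>
    Quot.out_eq _
  have hreach : ∀ x, G.Reachable x (root x) := fun x => (ConnectedComponent.exact (hmk x)).symm
  have hrootadj : ∀ {u v : V}, G.Adj u v → root v = root u := by
    intro u v h
    have : G.connectedComponentMk v = G.connectedComponentMk u := Quot.sound h.reachable.symm
    simp only [hrootdef, this]
  have hrootroot : ∀ x, root (root x) = root x := by
    intro x
    simp only [hrootdef]
    rw [show G.connectedComponentMk (Quot.out (G.connectedComponentMk x)) = G.connectedComponentMk x
      from Quot.out_eq _]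
  set p : ∀ x : V, G.Path x (root x) := fun x => (hreach x).some.toPath with hpdef
  -- key property
  have key : ∀ e ∈ G.edgeFinset, ∃ x y, e = s(x, y) ∧
      ∃ (h : G.Adj x y) (W : G.Walk y (root x)), ((p x : G.Walk x (root x))) = Walk.cons h W := by
    intro e he
    rw [mem_edgeFinset] at he
    induction e with
    | h u v =>
      have h : G.Adj u v := he
      have hr : root v = root u := hrootadj h
      by_cases hu : u ∈ ((p v : G.Walk v (root v))).support
      · -- child is v
        refine ⟨v, u, Sym2.eq_swap, h.symm, ?_⟩
        have htake : ((p v : G.Walk v (root v)).takeUntil u hu) = (Path.singleton h.symm : G.Walk v u) := by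
          have h1 : ((p v : G.Walk v (root v)).takeUntil u hu).IsPath := (p v).isPath.takeUntil hu
          have := hG.path_unique ⟨_, h1⟩ (Path.singleton h.symm)
          exact congrArg Subtype.val this
        refine ⟨(p v : G.Walk v (root v)).dropUntil u hu, ?_⟩
        conv_lhs => rw [← Walk.take_spec (p v : G.Walk v (root v)) hu]
        rw [htake]
        rfl
      · -- child is u
        refine ⟨u, v, rfl, h, ((p v : G.Walk v (root v)).copy rfl hr), ?_⟩
        have h1 : (Walk.cons h ((p v : G.Walk v (root v)).copy rfl hr)).IsPath := by
          rw [Walk.cons_isPath_iff]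
          exact ⟨(Walk.isPath_copy _ rfl hr).2 (p v).isPath, by rwa [Walk.support_copy]⟩
        have := hG.path_unique (p u) ⟨_, h1⟩
        exact congrArg Subtype.val this
  -- the injection
  set φ : Sym2 V → V := fun e =>
    if he : ∃ x y, e = s(x, y) ∧ ∃ (h : G.Adj x y) (W : G.Walk y (root x)),
        ((p x : G.Walk x (root x))) = Walk.cons h W then he.choose else x₀ with hφdef
  have hφspec : ∀ e ∈ G.edgeFinset, ∃ y, e = s(φ e, y) ∧ ∃ (h : G.Adj (φ e) y) (W : G.Walk y (root (φ e))),
      ((p (φ e) : G.Walk (φ e) (root (φ e)))) = Walk.cons h W := by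
    intro e he
    have hk := key e he
    obtain ⟨x, y, h1, h2⟩ := hk
    have hex : ∃ x y, e = s(x, y) ∧ ∃ (h : G.Adj x y) (W : G.Walk y (root x)),
        ((p x : G.Walk x (root x))) = Walk.cons h W := ⟨x, y, h1, h2⟩
    have hch : φ e = hex.choose := by simp only [hφdef]; rw [dif_pos hex]
    rw [hch]
    exact hex.choose_spec
  have hinj : Set.InjOn φ G.edgeFinset := by
    intro e1 h1 e2 h2 heq
    have s1 := hφspec e1 h1
    have s2 := hφspec e2 h2
    rw [heq] at s1
    obtain ⟨y1, he1, h1', W1, hw1⟩ := s1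
    obtain ⟨y2, he2, h2', W2, hw2⟩ := s2
    have hcc := hw1.symm.trans hw2
    injection hcc with hy hrest
    rw [hrest] at he1
    exact he1.trans he2.symm
  -- roots are not in the image
  have hnotroot : ∀ e ∈ G.edgeFinset, φ e ≠ root x₀ := by
    intro e he hcon
    obtain ⟨y, hey, h', W, hw⟩ := hφspec e he
    have hx : root (φ e) = φ e := by rw [hcon, hrootroot]
    have hnil : ((p (φ e) : G.Walk (φ e) (root (φ e))).copy rfl hx) = Walk.nil := by
      rw [← Walk.isPath_iff_eq_nil]
      exact (Walk.isPath_copy _ rfl hx).2 (p (φ e)).isPath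
    have hsup := congrArg Walk.support hnil
    rw [Walk.support_copy, hw, Walk.support_cons, Walk.support_nil] at hsup
    injection hsup with hh ht
    exact Walk.support_ne_nil W ht
  calc G.edgeFinset.card + 1 = (G.edgeFinset.image φ).card + 1 := by
        rw [Finset.card_image_of_injOn hinj]
      _ ≤ (univ.erase (root x₀)).card + 1 := by
        gcongr
        intro x hx
        simp only [Finset.mem_image] at hx
        obtain ⟨e, he, rfl⟩ := hx
        exact Finset.mem_erase.2 ⟨hnotroot e he, Finset.mem_univ _⟩
      _ ≤ Fintype.card V := by
        rw [Finset.card_erase_of_mem (Finset.mem_univ _), Finset.card_univ]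
        have : 1 ≤ Fintype.card V := Fintype.card_pos_iff.2 ⟨x₀⟩
        omega

lemma chi_structure {N : ℕ} (hN : 4 ≤ N) (χ : Sym2 (Fin N) → ZMod 3)
    (hnoalt : ∀ u v w z : Fin N, ([u, v, w, z] : List (Fin N)).Nodup →
      χ s(u, v) + χ s(w, z) = χ s(v, w) + χ s(z, u)) :
    ∃ (a : Fin N → ZMod 3) (c : ZMod 3), ∀ u v : Fin N, u ≠ v →
      χ s(u, v) = a u + a v + c := by
  have H : ∀ u v w z : Fin N, u ≠ v → u ≠ w → u ≠ z → v ≠ w → v ≠ z → w ≠ z →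
      χ s(u, v) + χ s(w, z) = χ s(v, w) + χ s(z, u) := by
    intro u v w z h1 h2 h3 h4 h5 h6
    apply hnoalt
    simp [h1, h2, h3, h4, h5, h6]
  have hs : ∀ x y : Fin N, χ s(x, y) = χ s(y, x) := fun x y => by rw [Sym2.eq_swap]
  set p0 : Fin N := ⟨0, by omega⟩
  set p1 : Fin N := ⟨1, by omega⟩
  set p2 : Fin N := ⟨2, by omega⟩
  have h01 : p0 ≠ p1 := by simp [Fin.ext_iff]
  have h02 : p0 ≠ p2 := by simp [Fin.ext_iff]
  have h12 : p1 ≠ p2 := by simp [Fin.ext_iff, p1, p2]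
  set c : ZMod 3 := χ s(p0, p1) + χ s(p0, p2) - χ s(p1, p2) with hc
  set a : Fin N → ZMod 3 := fun u => if u = p0 then 0 else χ s(u, p0) - c with ha
  refine ⟨a, c, ?_⟩
  have dagger : ∀ u v : Fin N, u ≠ v → u ≠ p0 → v ≠ p0 →
      χ s(u, v) + χ s(p0, p1) + χ s(p0, p2) = χ s(u, p0) + χ s(v, p0) + χ s(p1, p2) := by
    have case1 : ∀ v : Fin N, v ≠ p0 → v ≠ p1 → χ s(p1, v) + χ s(p0, p1) + χ s(p0, p2)
        = χ s(p1, p0) + χ s(v, p0) + χ s(p1, p2) := by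
      intro v hv0 hv1
      by_cases hv2 : v = p2
      · subst hv2
        linear_combination hs p0 p1 + hs p0 p2
      · have h := H p1 v p0 p2 (Ne.symm hv1) h01.symm h12 hv0 hv2 h02
        linear_combination h + hs p0 p1 + hs p2 p1
    have case2 : ∀ v : Fin N, v ≠ p0 → v ≠ p1 → v ≠ p2 → χ s(p2, v) + χ s(p0, p1) + χ s(p0, p2)
        = χ s(p2, p0) + χ s(v, p0) + χ s(p1, p2) := by
      intro v hv0 hv1 hv2
      have h := H p2 v p0 p1 (Ne.symm hv2) h02.symm h12.symm hv0 hv1 h01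
      linear_combination h + hs p0 p2
    have case3 : ∀ u v : Fin N, u ≠ v → u ≠ p0 → v ≠ p0 → u ≠ p1 → v ≠ p1 → u ≠ p2 →
        χ s(u, v) + χ s(p0, p1) + χ s(p0, p2) = χ s(u, p0) + χ s(v, p0) + χ s(p1, p2) := by
      intro u v huv hu0 hv0 hu1 hv1 hu2
      have hA := H u v p0 p1 huv hu0 hu1 hv0 hv1 h01
      have hB := H p1 u p0 p2 (Ne.symm hu1) h01.symm h12 hu0 hu2 h02
      linear_combination hA + hB + hs p2 p1
    intro u v huv hu0 hv0
    by_cases hu1 : u = p1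
    · subst hu1; exact case1 v hv0 (Ne.symm huv)
    by_cases hv1 : v = p1
    · subst hv1
      have h := case1 u hu0 hu1
      linear_combination h + hs u p1
    by_cases hu2 : u = p2
    · by_cases hv2 : v = p2
      · exact absurd (hu2.trans hv2.symm) huv
      · subst hu2; exact case2 v hv0 hv1 hv2
    · by_cases hv2 : v = p2
      · subst hv2
        have h := case2 u hu0 hu1 hu2
        linear_combination h + hs u p2
      · exact case3 u v huv hu0 hv0 hu1 hv1 hu2
  intro u v huv
  by_cases hu : u = p0
  · subst hu
    have hv : ¬ v = p0 := Ne.symm huv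
    simp only [ha, if_pos rfl, if_neg hv]
    linear_combination hs p0 v
  · by_cases hv : v = p0
    · subst hv
      simp only [ha, if_pos rfl, if_neg hu]
      ring
    · simp only [ha, if_neg hu, if_neg hv]
      linear_combination dagger u v huv hu hv + hc

lemma sum_formula {V : Type} [Fintype V] [DecidableEq V] (F : SimpleGraph V) [DecidableRel F.Adj]
    {N : ℕ} (f : V → Fin N) (hf : Function.Injective f) (a : Fin N → ZMod 3) (c : ZMod 3)
    (χ : Sym2 (Fin N) → ZMod 3)
    (hχ : ∀ u v : Fin N, u ≠ v → χ s(u, v) = a u + a v + c) :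
    ∑ e ∈ F.edgeFinset, χ (e.map f)
      = ∑ v : V, (F.degree v : ZMod 3) * a (f v) + (F.edgeFinset.card : ZMod 3) * c := by
  have step1 : ∀ e ∈ F.edgeFinset, χ (e.map f)
      = (∑ v : V, if v ∈ e then a (f v) else 0) + c := by
    intro e he
    rw [SimpleGraph.mem_edgeFinset] at he
    induction e with
    | h u v =>
      have hadj : F.Adj u v := he
      have hne : u ≠ v := hadj.ne
      have hQ : ∀ x : V, (if x ∈ s(u, v) then a (f x) else 0)
          = (if x = u then a (f x) else 0) + (if x = v then a (f x) else 0) := by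
        intro x
        by_cases h1 : x = u <;> by_cases h2 : x = v
        · exact absurd (h1 ▸ h2) hne
        · subst h1; simp [Sym2.mem_iff, h2, hne]
        · subst h2; simp [Sym2.mem_iff, h1, hne.symm]
        · simp [Sym2.mem_iff, h1, h2]
      rw [Sym2.map_pair_eq, hχ (f u) (f v) (fun h => hne (hf h))]
      rw [Finset.sum_congr rfl (fun x _ => hQ x), Finset.sum_add_distrib]
      rw [Finset.sum_ite_eq' univ u (fun x => a (f x)), Finset.sum_ite_eq' univ v (fun x => a (f x))]
      simp
  rw [Finset.sum_congr rfl step1, Finset.sum_add_distrib, Finset.sum_const, nsmul_eq_mul]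
  congr 1
  rw [Finset.sum_comm]
  refine Finset.sum_congr rfl ?_
  intro v _
  rw [Finset.sum_ite, Finset.sum_const_zero, add_zero, Finset.sum_const, nsmul_eq_mul]
  have : (F.edgeFinset.filter (fun e => v ∈ e)).card = F.degree v := by
    rw [← SimpleGraph.incidenceFinset_eq_filter, SimpleGraph.card_incidenceFinset_eq_degree]
  rw [this, mul_comm]

lemma zmod3_cases (x : ZMod 3) (h1 : x ≠ 1) (h2 : x ≠ 2) : x = 0 := by
  revert x; decide

lemma build_injection {V : Type} [Fintype V] [DecidableEq V] {N : ℕ} (d : V → ZMod 3)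
    (a : Fin N → ZMod 3) (T1 T2 : Finset (Fin N)) (hdisj : Disjoint T1 T2)
    (h1 : T1.card = (univ.filter (fun v => d v = 1)).card)
    (h2 : T2.card = (univ.filter (fun v => d v = 2)).card)
    (hV : Fintype.card V ≤ N) :
    ∃ f : V → Fin N, Function.Injective f ∧
      ∑ v : V, d v * a (f v) = ∑ x ∈ T1, a x + 2 * ∑ x ∈ T2, a x := by
  classical
  set V1 : Finset V := univ.filter (fun v => d v = 1) with hV1
  set V2 : Finset V := univ.filter (fun v => d v = 2) with hV2
  set V0 : Finset V := univ.filter (fun v => ¬(d v = 1) ∧ ¬(d v = 2)) with hV0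
  set T0 : Finset (Fin N) := (univ \ T1) \ T2 with hT0
  have hV12 : Disjoint V1 V2 := by
    rw [Finset.disjoint_left]
    intro x hx1 hx2
    rw [hV1, Finset.mem_filter] at hx1
    rw [hV2, Finset.mem_filter] at hx2
    rw [hx1.2] at hx2
    exact absurd hx2.2 (by decide)
  have hV01 : Disjoint V0 V1 := by
    rw [Finset.disjoint_left]
    intro x hx0 hx1
    rw [hV0, Finset.mem_filter] at hx0
    rw [hV1, Finset.mem_filter] at hx1
    exact hx0.2.1 hx1.2
  have hV02 : Disjoint V0 V2 := by
    rw [Finset.disjoint_left]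
    intro x hx0 hx2
    rw [hV0, Finset.mem_filter] at hx0
    rw [hV2, Finset.mem_filter] at hx2
    exact hx0.2.2 hx2.2
  have hpart : V1 ∪ V2 ∪ V0 = univ := by
    ext x
    simp only [Finset.mem_union, hV0, hV1, hV2, Finset.mem_filter, Finset.mem_univ, true_and,
      iff_true]
    tauto
  have hcards : V1.card + V2.card + V0.card = Fintype.card V := by
    rw [← Finset.card_union_of_disjoint hV12, ← Finset.card_union_of_disjoint (by
      exact Finset.disjoint_union_left.2 ⟨hV01.symm, hV02.symm⟩), hpart, Finset.card_univ]
  have hT1sub : T1 ⊆ univ := Finset.subset_univ _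
  have hT0card : V0.card ≤ T0.card := by
    rw [hT0, Finset.card_sdiff_of_subset (Finset.subset_sdiff.2 ⟨Finset.subset_univ _, hdisj.symm⟩),
      Finset.card_sdiff_of_subset (Finset.subset_univ _), Finset.card_univ, Fintype.card_fin]
    omega
  -- equivalences and embedding
  have e1 : ↥V1 ≃ ↥T1 := Finset.equivOfCardEq (h1.symm)
  have e2 : ↥V2 ≃ ↥T2 := Finset.equivOfCardEq (h2.symm)
  have e0 : ↥V0 ↪ ↥T0 := Classical.choice (Function.Embedding.nonempty_iff_card_le.2 (by
    rwa [Fintype.card_coe, Fintype.card_coe]))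
  have hd1 : ∀ v ∈ V1, d v = 1 := by intro v hv; rw [hV1, Finset.mem_filter] at hv; exact hv.2
  have hd2 : ∀ v ∈ V2, d v = 2 := by intro v hv; rw [hV2, Finset.mem_filter] at hv; exact hv.2
  have hd0 : ∀ v, v ∉ V1 → v ∉ V2 → d v = 0 := by
    intro v hv1 hv2
    rw [hV1, Finset.mem_filter] at hv1
    rw [hV2, Finset.mem_filter] at hv2
    exact zmod3_cases _ (fun h => hv1 ⟨Finset.mem_univ _, h⟩) (fun h => hv2 ⟨Finset.mem_univ _, h⟩)
  set f : V → Fin N := fun v =>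
    if h : v ∈ V1 then (e1 ⟨v, h⟩ : Fin N)
    else if h' : v ∈ V2 then (e2 ⟨v, h'⟩ : Fin N)
    else (e0 ⟨v, by rw [hV0, Finset.mem_filter]; exact ⟨Finset.mem_univ _,
      fun hh => h (by rw [hV1, Finset.mem_filter]; exact ⟨Finset.mem_univ _, hh⟩),
      fun hh => h' (by rw [hV2, Finset.mem_filter]; exact ⟨Finset.mem_univ _, hh⟩)⟩⟩ : Fin N)
    with hfdef
  have hrange1 : ∀ v (h : v ∈ V1), f v = (e1 ⟨v, h⟩ : Fin N) := by
    intro v h; rw [hfdef]; exact dif_pos h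
  have hrange2 : ∀ v (h : v ∉ V1) (h' : v ∈ V2), f v = (e2 ⟨v, h'⟩ : Fin N) := by
    intro v h h'; rw [hfdef]; simp only [dif_neg h]; exact dif_pos h'
  have hmem1 : ∀ v ∈ V1, f v ∈ T1 := by
    intro v h; rw [hrange1 v h]; exact Finset.coe_mem _
  have hmem2 : ∀ v ∈ V2, f v ∈ T2 := by
    intro v h
    by_cases h1' : v ∈ V1
    · exact absurd h (Finset.disjoint_left.1 hV12 h1')
    · rw [hrange2 v h1' h]; exact Finset.coe_mem _
  have hmem0 : ∀ v, v ∉ V1 → v ∉ V2 → f v ∈ T0 := by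
    intro v h h'
    rw [hfdef]
    simp only [dif_neg h, dif_neg h']
    exact Finset.coe_mem _
  have hT0T1 : ∀ x ∈ T0, x ∉ T1 := by
    intro x hx; rw [hT0] at hx
    simp only [Finset.mem_sdiff] at hx; exact hx.1.2
  have hT0T2 : ∀ x ∈ T0, x ∉ T2 := by
    intro x hx; rw [hT0] at hx
    simp only [Finset.mem_sdiff] at hx; exact hx.2
  have hinj : Function.Injective f := by
    intro x y hxy
    by_cases hx1 : x ∈ V1 <;> by_cases hy1 : y ∈ V1
    · rw [hrange1 x hx1, hrange1 y hy1] at hxy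
      exact congrArg Subtype.val (e1.injective (Subtype.ext hxy))
    all_goals (try (by_cases hx2 : x ∈ V2)) <;> (try (by_cases hy2 : y ∈ V2))
    all_goals try (
      first
      | (exfalso
         first
         | (have m1 := hmem1 x hx1; have m2 := hmem2 y hy2; rw [hxy] at m1
            exact absurd m2 (Finset.disjoint_left.1 hdisj m1))
         | (have m1 := hmem1 y hy1; have m2 := hmem2 x hx2; rw [← hxy] at m1
            exact absurd m2 (Finset.disjoint_left.1 hdisj m1))
         | (have m1 := hmem1 x hx1; have m0 := hmem0 y hy1 hy2; rw [hxy] at m1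
            exact hT0T1 _ m0 m1)
         | (have m1 := hmem1 y hy1; have m0 := hmem0 x hx1 hx2; rw [← hxy] at m1
            exact hT0T1 _ m0 m1)
         | (have m2 := hmem2 x hx2; have m0 := hmem0 y hy1 hy2; rw [hxy] at m2
            exact hT0T2 _ m0 m2)
         | (have m2 := hmem2 y hy2; have m0 := hmem0 x hx1 hx2; rw [← hxy] at m2
            exact hT0T2 _ m0 m2)))
    · -- both in V2
      rw [hrange2 x hx1 hx2, hrange2 y hy1 hy2] at hxy
      exact congrArg Subtype.val (e2.injective (Subtype.ext hxy))
    · -- both in V0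
      rw [hfdef] at hxy
      simp only [dif_neg hx1, dif_neg hx2, dif_neg hy1, dif_neg hy2] at hxy
      exact congrArg Subtype.val (e0.injective (Subtype.ext hxy))
  refine ⟨f, hinj, ?_⟩
  -- the sum computation
  have hsplit : ∑ v : V, d v * a (f v)
      = ∑ v ∈ V1, d v * a (f v) + ∑ v ∈ V2, d v * a (f v) + ∑ v ∈ V0, d v * a (f v) := by
    rw [← hpart, Finset.sum_union (Finset.disjoint_union_left.2 ⟨hV01.symm, hV02.symm⟩),
      Finset.sum_union hV12]
  rw [hsplit]
  have hsum0 : ∑ v ∈ V0, d v * a (f v) = 0 := by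
    apply Finset.sum_eq_zero
    intro v hv
    rw [hV0, Finset.mem_filter] at hv
    rw [zmod3_cases _ hv.2.1 hv.2.2, zero_mul]
  have hsum1 : ∑ v ∈ V1, d v * a (f v) = ∑ x ∈ T1, a x := by
    have h1' : ∑ v ∈ V1, d v * a (f v) = ∑ v ∈ V1, a (f v) :=
      Finset.sum_congr rfl (fun v hv => by rw [hd1 v hv, one_mul])
    rw [h1']
    apply Finset.sum_bij (i := fun v hv => ((e1 ⟨v, hv⟩ : ↥T1) : Fin N))
    · intro v hv; exact Finset.coe_mem _
    · intro v hv w hw heq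
      exact congrArg Subtype.val (e1.injective (Subtype.ext heq))
    · intro x hx
      refine ⟨(e1.symm ⟨x, hx⟩ : ↥V1), (e1.symm ⟨x, hx⟩).2, ?_⟩
      simp
    · intro v hv; rw [hrange1 v hv]
  have hsum2 : ∑ v ∈ V2, d v * a (f v) = 2 * ∑ x ∈ T2, a x := by
    have : ∀ v ∈ V2, d v * a (f v) = 2 * a (f v) := by
      intro v hv; rw [hd2 v hv]
    rw [Finset.sum_congr rfl this, ← Finset.mul_sum]
    congr 1
    have hnot1 : ∀ v ∈ V2, v ∉ V1 := fun v hv => Finset.disjoint_right.1 hV12 hv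
    apply Finset.sum_bij (i := fun v hv => ((e2 ⟨v, hv⟩ : ↥T2) : Fin N))
    · intro v hv; exact Finset.coe_mem _
    · intro v hv w hw heq
      exact congrArg Subtype.val (e2.injective (Subtype.ext heq))
    · intro x hx
      refine ⟨(e2.symm ⟨x, hx⟩ : ↥V2), (e2.symm ⟨x, hx⟩).2, ?_⟩
      simp
    · intro v hv; rw [hrange2 v (hnot1 v hv) hv]
  rw [hsum0, hsum1, hsum2, add_zero]

lemma triple_lemma {N : ℕ} (a : Fin N → ZMod 3) (U : Finset (Fin N)) (hU : 5 ≤ U.card) :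
    ∃ T ⊆ U, T.card = 3 ∧ ∑ x ∈ T, a x = 0 := by
  by_cases hj : ∃ j : ZMod 3, 3 ≤ (U.filter (fun x => a x = j)).card
  · obtain ⟨j, hj⟩ := hj
    obtain ⟨T, hTsub, hTcard⟩ := Finset.exists_subset_card_eq hj
    refine ⟨T, hTsub.trans (Finset.filter_subset _ _), hTcard, ?_⟩
    have : ∀ x ∈ T, a x = j := fun x hx => (Finset.mem_filter.1 (hTsub hx)).2
    rw [Finset.sum_congr rfl this, Finset.sum_const, hTcard]
    show (3 : ℕ) • j = 0
    have h3 : ((3 : ℕ) : ZMod 3) = 0 := by decide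
    rw [nsmul_eq_mul, h3, zero_mul]
  · push_neg at hj
    have hne : ∀ j : ZMod 3, (U.filter (fun x => a x = j)).Nonempty := by
      intro j
      rw [Finset.nonempty_iff_ne_empty]
      intro hemp
      have hsplit : ∀ j' : ZMod 3, U.card = (U.filter (fun x => a x = j')).card
          + (U.filter (fun x => ¬ a x = j')).card :=
        fun j' => (Finset.card_filter_add_card_filter_not _).symm
      have hsub : U.filter (fun x => ¬ a x = j) ⊆
          (U.filter (fun x => a x = j + 1)) ∪ (U.filter (fun x => a x = j + 2)) := by
        intro x hx
        rw [Finset.mem_filter] at hx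
        rw [Finset.mem_union, Finset.mem_filter, Finset.mem_filter]
        have key : ∀ y j' : ZMod 3, y ≠ j' → y = j' + 1 ∨ y = j' + 2 := by decide
        have := key (a x) j hx.2
        tauto
      have := hsplit j
      rw [hemp] at this
      have hle := Finset.card_le_card hsub
      have hle2 := Finset.card_union_le (U.filter (fun x => a x = j + 1))
        (U.filter (fun x => a x = j + 2))
      have c1 := hj (j + 1)
      have c2 := hj (j + 2)
      simp at this
      omega
    obtain ⟨x0, hx0⟩ := hne 0
    obtain ⟨x1, hx1⟩ := hne 1
    obtain ⟨x2, hx2⟩ := hne 2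
    rw [Finset.mem_filter] at hx0 hx1 hx2
    have d01 : x0 ≠ x1 := fun h => by rw [h, hx1.2] at hx0; exact absurd hx0.2 (by decide)
    have d02 : x0 ≠ x2 := fun h => by rw [h, hx2.2] at hx0; exact absurd hx0.2 (by decide)
    have d12 : x1 ≠ x2 := fun h => by rw [h, hx2.2] at hx1; exact absurd hx1.2 (by decide)
    refine ⟨{x0, x1, x2}, ?_, ?_, ?_⟩
    · intro x hx
      simp only [Finset.mem_insert, Finset.mem_singleton] at hx
      rcases hx with rfl | rfl | rfl
      exacts [hx0.1, hx1.1, hx2.1]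
    · rw [Finset.card_insert_of_notMem (by simp [d01, d02]),
        Finset.card_insert_of_notMem (by simp [d12]), Finset.card_singleton]
    · rw [Finset.sum_insert (by simp [d01, d02]), Finset.sum_insert (by simp [d12]),
        Finset.sum_singleton, hx0.2, hx1.2, hx2.2]
      decide

lemma D1 {N : ℕ} (a : Fin N → ZMod 3) : ∀ (n1 : ℕ) (U : Finset (Fin N)), 3 ∣ n1 →
    n1 + 2 ≤ U.card → ∃ T ⊆ U, T.card = n1 ∧ ∑ x ∈ T, a x = 0 := by
  intro n1
  induction n1 using Nat.strong_induction_on with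
  | _ n1 ih =>
    intro U hdvd hle
    rcases Nat.eq_zero_or_pos n1 with rfl | hpos
    · exact ⟨∅, Finset.empty_subset _, Finset.card_empty, Finset.sum_empty⟩
    · have h3 : 3 ≤ n1 := by
        obtain ⟨k, rfl⟩ := hdvd
        omega
      obtain ⟨T0, hT0sub, hT0card, hT0sum⟩ := triple_lemma a U (by omega)
      obtain ⟨T', hT'sub, hT'card, hT'sum⟩ := ih (n1 - 3) (by omega) (U \ T0)
        (by omega)
        (by rw [Finset.card_sdiff_of_subset hT0sub, hT0card]; omega)
      have hdisj : Disjoint T0 T' := by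
        rw [Finset.disjoint_right]
        intro x hx
        exact (Finset.mem_sdiff.1 (hT'sub hx)).2
      refine ⟨T0 ∪ T', Finset.union_subset hT0sub
        (hT'sub.trans (Finset.sdiff_subset)), ?_, ?_⟩
      · rw [Finset.card_union_of_disjoint hdisj, hT0card, hT'card]; omega
      · rw [Finset.sum_union hdisj, hT0sum, hT'sum, add_zero]

lemma claim4 : ∀ (v : Fin 4 → ZMod 3) (S : ZMod 3), v 0 ≠ v 1 →
    ∃ i j k : Fin 4, i ≠ j ∧ i ≠ k ∧ j ≠ k ∧ v i + v j + 2 * v k + S = 0 := by decide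

lemma D2 {N : ℕ} (a : Fin N → ZMod 3) (n1 n2 : ℕ) (hn1 : 2 ≤ n1) (hn2 : 1 ≤ n2)
    (hN : n1 + n2 + 1 ≤ N) (hmod : (n1 : ZMod 3) + 2 * (n2 : ZMod 3) = 0) :
    ∃ T1 T2 : Finset (Fin N), Disjoint T1 T2 ∧ T1.card = n1 ∧ T2.card = n2 ∧
      ∑ x ∈ T1, a x + 2 * ∑ x ∈ T2, a x = 0 := by
  have hNuniv : (univ : Finset (Fin N)).card = N := by simp
  by_cases hconst : ∀ x y : Fin N, a x = a y
  · obtain ⟨T1, hT1sub, hT1card⟩ := Finset.exists_subset_card_eq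
      (show n1 ≤ (univ : Finset (Fin N)).card by omega)
    obtain ⟨T2, hT2sub, hT2card⟩ := Finset.exists_subset_card_eq
      (show n2 ≤ ((univ : Finset (Fin N)) \ T1).card by
        rw [Finset.card_sdiff_of_subset (Finset.subset_univ _), hNuniv, hT1card]; omega)
    have hdisj : Disjoint T1 T2 := by
      rw [Finset.disjoint_right]
      intro x hx
      exact (Finset.mem_sdiff.1 (hT2sub hx)).2
    have hx0 : 0 < N := by omega
    set x0 : Fin N := ⟨0, hx0⟩
    have hall : ∀ x : Fin N, a x = a x0 := fun x => hconst x x0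
    refine ⟨T1, T2, hdisj, hT1card, hT2card, ?_⟩
    rw [Finset.sum_congr rfl (fun x _ => hall x), Finset.sum_congr rfl (fun x _ => hall x),
      Finset.sum_const, Finset.sum_const, hT1card, hT2card, nsmul_eq_mul, nsmul_eq_mul]
    calc (n1 : ZMod 3) * a x0 + 2 * ((n2 : ZMod 3) * a x0)
        = ((n1 : ZMod 3) + 2 * (n2 : ZMod 3)) * a x0 := by ring
      _ = 0 := by rw [hmod, zero_mul]
  · push_neg at hconst
    obtain ⟨x, y, hxy⟩ := hconst
    have hxyne : x ≠ y := fun h => hxy (by rw [h])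
    -- pick two more distinct elements z w
    obtain ⟨S2, hS2sub, hS2card⟩ := Finset.exists_subset_card_eq
      (show 2 ≤ ((univ : Finset (Fin N)) \ {x, y}).card by
        rw [Finset.card_sdiff_of_subset (Finset.subset_univ _), hNuniv]
        have : ({x, y} : Finset (Fin N)).card ≤ 2 := Finset.card_insert_le _ _ |>.trans (by simp)
        omega)
    obtain ⟨z, w, hzw, rfl⟩ := Finset.card_eq_two.1 hS2card
    have hzx : z ≠ x := by
      have := hS2sub (Finset.mem_insert_self z {w})
      rw [Finset.mem_sdiff] at this
      intro h; exact this.2 (by simp [h])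
    have hzy : z ≠ y := by
      have := hS2sub (Finset.mem_insert_self z {w})
      rw [Finset.mem_sdiff] at this
      intro h; exact this.2 (by simp [h])
    have hwx : w ≠ x := by
      have := hS2sub (Finset.mem_insert_of_mem (Finset.mem_singleton_self w))
      rw [Finset.mem_sdiff] at this
      intro h; exact this.2 (by simp [h])
    have hwy : w ≠ y := by
      have := hS2sub (Finset.mem_insert_of_mem (Finset.mem_singleton_self w))
      rw [Finset.mem_sdiff] at this
      intro h; exact this.2 (by simp [h])
    set g : Fin 4 → Fin N := ![x, y, z, w] with hg
    have hginj : Function.Injective g := by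
      intro i j hij
      fin_cases i <;> fin_cases j <;>
        simp_all [hg, hxyne, hzx, hzy, hwx, hwy, hzw] <;>
        first
        | rfl
        | (exfalso; first
            | exact hxyne hij | exact hzx hij | exact hzy hij | exact hwx hij | exact hwy hij
            | exact hzw hij
            | exact hxyne hij.symm | exact hzx hij.symm | exact hzy hij.symm
            | exact hwx hij.symm | exact hwy hij.symm | exact hzw hij.symm)
    set G : Finset (Fin N) := {x, y, z, w} with hG
    have hmemG : ∀ i : Fin 4, g i ∈ G := by
      intro i; fin_cases i <;> simp [hg, hG]
    set R : Finset (Fin N) := univ \ G with hR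
    have hGcard : G.card ≤ 4 := by
      have c1 := Finset.card_insert_le x ({y, z, w} : Finset (Fin N))
      have c2 := Finset.card_insert_le y ({z, w} : Finset (Fin N))
      have c3 := Finset.card_insert_le z ({w} : Finset (Fin N))
      have c4 : ({w} : Finset (Fin N)).card = 1 := Finset.card_singleton w
      rw [hG]
      omega
    have hRcard : N - 4 ≤ R.card := by
      rw [hR, Finset.card_sdiff_of_subset (Finset.subset_univ _), hNuniv]
      omega
    obtain ⟨T1', hT1'sub, hT1'card⟩ := Finset.exists_subset_card_eq
      (show n1 - 2 ≤ R.card by omega)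
    obtain ⟨T2', hT2'sub, hT2'card⟩ := Finset.exists_subset_card_eq
      (show n2 - 1 ≤ (R \ T1').card by
        rw [Finset.card_sdiff_of_subset hT1'sub, hT1'card]; omega)
    have hT2'R : T2' ⊆ R := hT2'sub.trans (Finset.sdiff_subset)
    have hd12 : Disjoint T1' T2' := by
      rw [Finset.disjoint_right]
      intro q hq
      exact (Finset.mem_sdiff.1 (hT2'sub hq)).2
    have hgR : ∀ (i : Fin 4) (T : Finset (Fin N)), T ⊆ R → g i ∉ T := by
      intro i T hT hmem
      have := hT hmem
      rw [hR, Finset.mem_sdiff] at this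
      exact this.2 (hmemG i)
    -- apply claim
    obtain ⟨i, j, k, hij, hik, hjk, hsum⟩ := claim4 (fun m => a (g m))
      (∑ q ∈ T1', a q + 2 * ∑ q ∈ T2', a q)
      (by simpa [hg] using hxy)
    refine ⟨insert (g i) (insert (g j) T1'), insert (g k) T2', ?_, ?_, ?_, ?_⟩
    · rw [Finset.disjoint_left]
      intro q hq hq2
      simp only [Finset.mem_insert] at hq hq2
      rcases hq with rfl | rfl | hq
      · rcases hq2 with h | h
        · exact hik (hginj h)
        · exact hgR i T2' hT2'R h
      · rcases hq2 with h | h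
        · exact hjk (hginj h)
        · exact hgR j T2' hT2'R h
      · rcases hq2 with rfl | h
        · exact hgR k T1' hT1'sub hq
        · exact Finset.disjoint_left.1 hd12 hq h
    · have hgjT1' : g j ∉ T1' := hgR j T1' hT1'sub
      have hgi : g i ∉ insert (g j) T1' := by
        simp only [Finset.mem_insert]
        rintro (h | h)
        · exact hij (hginj h)
        · exact hgR i T1' hT1'sub h
      rw [Finset.card_insert_of_notMem hgi, Finset.card_insert_of_notMem hgjT1', hT1'card]
      omega
    · rw [Finset.card_insert_of_notMem (hgR k T2' hT2'R), hT2'card]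
      omega
    · have hgjT1' : g j ∉ T1' := hgR j T1' hT1'sub
      have hgi : g i ∉ insert (g j) T1' := by
        simp only [Finset.mem_insert]
        rintro (h | h)
        · exact hij (hginj h)
        · exact hgR i T1' hT1'sub h
      rw [Finset.sum_insert hgi, Finset.sum_insert hgjT1', Finset.sum_insert (hgR k T2' hT2'R)]
      linear_combination hsum

theorem stmt8 {V : Type} [Fintype V] [DecidableEq V]
    (F : SimpleGraph V) [DecidableRel F.Adj] (n t : ℕ)
    (hcard : Fintype.card V = n)
    (hforest : F.IsAcyclic)
    (hdiv : 3 ∣ F.edgeFinset.card)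
    (hiso : ∀ v, 0 < F.degree v)
    (htype : ForestOfType F t)
    (χ : Sym2 (Fin (n + t)) → ZMod 3)
    (hnoalt : ∀ u v w z : Fin (n + t), ([u, v, w, z] : List (Fin (n + t))).Nodup →
      χ s(u, v) + χ s(w, z) = χ s(v, w) + χ s(z, u)) :
    HasZeroSumCopy F χ := by
  classical
  by_cases hVempty : IsEmpty V
  · refine ⟨fun v => isEmptyElim v, fun v => isEmptyElim v, ?_⟩
    have hemp : F.edgeFinset = ∅ := by
      rw [Finset.eq_empty_iff_forall_notMem]
      intro e he
      induction e with
      | h u v => exact isEmptyElim u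
    rw [hemp, Finset.sum_empty]
  -- nonempty case
  have hVne : Nonempty V := not_isEmpty_iff.1 hVempty
  obtain ⟨v0⟩ := hVne
  have hedge1 : 1 ≤ F.edgeFinset.card := by
    have hd := hiso v0
    rw [← SimpleGraph.card_neighborFinset_eq_degree] at hd
    obtain ⟨u, hu⟩ := Finset.card_pos.1 hd
    rw [SimpleGraph.mem_neighborFinset] at hu
    have : s(v0, u) ∈ F.edgeFinset := by
      rw [SimpleGraph.mem_edgeFinset]
      exact hu
    exact Finset.card_pos.2 ⟨_, this⟩
  have hedge3 : 3 ≤ F.edgeFinset.card := by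
    obtain ⟨k, hk⟩ := hdiv
    omega
  have hbound : F.edgeFinset.card + 1 ≤ Fintype.card V := forest_bound hforest v0
  have hn4 : 4 ≤ n := by omega
  -- degree classes
  set d : V → ZMod 3 := fun v => ((F.degree v : ℕ) : ZMod 3) with hd
  set n1 : ℕ := (univ.filter (fun v => d v = 1)).card with hn1
  set n2 : ℕ := (univ.filter (fun v => d v = 2)).card with hn2
  set n0 : ℕ := (univ.filter (fun v => d v = 0)).card with hn0
  -- mod-3 translations
  have hiff : ∀ (v : V) (k : ℕ), k < 3 → (d v = (k : ℕ) ↔ F.degree v % 3 = k) := by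
    intro v k hk
    rw [hd, ZMod.natCast_eq_natCast_iff]
    unfold Nat.ModEq
    constructor
    · intro h; omega
    · intro h; omega
  have hiff1 : ∀ v : V, d v = 1 ↔ F.degree v % 3 = 1 := by
    intro v
    have := hiff v 1 (by omega)
    rwa [Nat.cast_one] at this
  have hiff2 : ∀ v : V, d v = 2 ↔ F.degree v % 3 = 2 := by
    intro v
    have := hiff v 2 (by omega)
    rwa [Nat.cast_two] at this
  have hiff0 : ∀ v : V, d v = 0 ↔ F.degree v % 3 = 0 := by
    intro v
    have := hiff v 0 (by omega)
    rwa [Nat.cast_zero] at this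
  have hzc : ∀ x : ZMod 3, x = 0 ∨ x = 1 ∨ x = 2 := by decide
  -- filter set equalities
  have e2 : (univ.filter (fun v => ¬ d v = 1)).filter (fun v => d v = 2)
      = univ.filter (fun v => d v = 2) := by
    rw [Finset.filter_filter]
    apply Finset.filter_congr
    intro x _
    constructor
    · exact fun h => h.2
    · exact fun h => ⟨by rw [h]; decide, h⟩
  have e0 : (univ.filter (fun v => ¬ d v = 1)).filter (fun v => ¬ d v = 2)
      = univ.filter (fun v => d v = 0) := by
    rw [Finset.filter_filter]
    apply Finset.filter_congr
    intro x _
    constructor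
    · rintro ⟨ha, hb⟩
      rcases hzc (d x) with h | h | h
      · exact h
      · exact absurd h ha
      · exact absurd h hb
    · intro h
      exact ⟨by rw [h]; decide, by rw [h]; decide⟩
  -- partition cardinalities
  have hpartcard : n1 + n2 + n0 = n := by
    have s1 := Finset.card_filter_add_card_filter_not (s := (univ : Finset V))
      (p := fun v => d v = 1)
    have s2 := Finset.card_filter_add_card_filter_not
      (s := univ.filter (fun v => ¬ d v = 1)) (p := fun v => d v = 2)
    rw [e2, e0] at s2
    rw [Finset.card_univ, hcard] at s1
    rw [hn1, hn2, hn0]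
    omega
  -- sum of degrees in ZMod 3
  have hsumdeg : ∑ v : V, d v = 0 := by
    rw [hd]
    rw [← Nat.cast_sum]
    rw [SimpleGraph.sum_degrees_eq_twice_card_edges]
    have hc0 : ((F.edgeFinset.card : ℕ) : ZMod 3) = 0 :=
      (ZMod.natCast_eq_zero_iff _ _).2 hdiv
    push_cast
    push_cast at hc0
    rw [hc0, mul_zero]
  have hmod12 : (n1 : ZMod 3) + 2 * (n2 : ZMod 3) = 0 := by
    have hsplit : ∑ v : V, d v
        = ∑ v ∈ univ.filter (fun v => d v = 1), d v
          + (∑ v ∈ (univ.filter (fun v => ¬ d v = 1)).filter (fun v => d v = 2), d v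
          + ∑ v ∈ (univ.filter (fun v => ¬ d v = 1)).filter (fun v => ¬ d v = 2), d v) := by
      rw [Finset.sum_filter_add_sum_filter_not
        (s := univ.filter (fun v => ¬ d v = 1)) (p := fun v => d v = 2)]
      rw [Finset.sum_filter_add_sum_filter_not]
    have h1 : ∑ v ∈ univ.filter (fun v => d v = 1), d v = (n1 : ZMod 3) := by
      rw [Finset.sum_congr rfl (fun v hv => (Finset.mem_filter.1 hv).2), Finset.sum_const,
        ← hn1, nsmul_eq_mul, mul_one]
    have h2 : ∑ v ∈ (univ.filter (fun v => ¬ d v = 1)).filter (fun v => d v = 2), d v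
        = (n2 : ZMod 3) * 2 := by
      rw [e2, Finset.sum_congr rfl (fun v hv => (Finset.mem_filter.1 hv).2), Finset.sum_const,
        ← hn2, nsmul_eq_mul]
    have h3 : ∑ v ∈ (univ.filter (fun v => ¬ d v = 1)).filter (fun v => ¬ d v = 2), d v = 0 := by
      apply Finset.sum_eq_zero
      intro v hv
      rw [e0] at hv
      exact (Finset.mem_filter.1 hv).2
    rw [hsplit, h1, h2, h3, add_zero] at hsumdeg
    linear_combination hsumdeg
  -- lower bound on degree sum
  have hlb : n1 * 1 + n2 * 2 + n0 * 3 ≤ 2 * F.edgeFinset.card := by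
    have hsplitN : ∑ v : V, F.degree v
        = ∑ v ∈ univ.filter (fun v => d v = 1), F.degree v
          + (∑ v ∈ (univ.filter (fun v => ¬ d v = 1)).filter (fun v => d v = 2), F.degree v
          + ∑ v ∈ (univ.filter (fun v => ¬ d v = 1)).filter (fun v => ¬ d v = 2), F.degree v) := by
      rw [Finset.sum_filter_add_sum_filter_not
        (s := univ.filter (fun v => ¬ d v = 1)) (p := fun v => d v = 2)]
      rw [Finset.sum_filter_add_sum_filter_not]
    rw [e2, e0] at hsplitN
    have b1 : n1 * 1 ≤ ∑ v ∈ univ.filter (fun v => d v = 1), F.degree v := by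
      rw [hn1, ← smul_eq_mul]
      exact Finset.card_nsmul_le_sum _ _ _ (fun v _ => hiso v)
    have b2 : n2 * 2 ≤ ∑ v ∈ univ.filter (fun v => d v = 2), F.degree v := by
      rw [hn2, ← smul_eq_mul]
      apply Finset.card_nsmul_le_sum
      intro v hv
      have := (hiff2 v).1 (Finset.mem_filter.1 hv).2
      omega
    have b0 : n0 * 3 ≤ ∑ v ∈ univ.filter (fun v => d v = 0), F.degree v := by
      rw [hn0, ← smul_eq_mul]
      apply Finset.card_nsmul_le_sum
      intro v hv
      have := (hiff0 v).1 (Finset.mem_filter.1 hv).2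
      have := hiso v
      omega
    rw [SimpleGraph.sum_degrees_eq_twice_card_edges] at hsplitN
    omega
  have hkey : n0 + 2 ≤ n1 := by
    rw [hcard] at hbound
    omega
  -- the coloring structure
  obtain ⟨a, c, hac⟩ := chi_structure (N := n + t) (by omega) χ hnoalt
  have hcast0 : ((F.edgeFinset.card : ℕ) : ZMod 3) = 0 :=
    (ZMod.natCast_eq_zero_iff _ _).2 hdiv
  suffices h : ∃ f : V → Fin (n + t), Function.Injective f ∧ ∑ v : V, d v * a (f v) = 0 by
    obtain ⟨f, hfinj, hfsum⟩ := h
    refine ⟨f, hfinj, ?_⟩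
    rw [sum_formula F f hfinj a c χ hac, hcast0, zero_mul, add_zero]
    rw [hd] at hfsum
    exact hfsum
  by_cases hn2pos : 1 ≤ n2
  · -- use D2
    have ht0 : n1 + n2 + 1 ≤ n + t := by
      rcases htype with ⟨ht, _⟩ | ⟨ht, _, _⟩ | ⟨ht, _, hnot1⟩
      · omega
      · omega
      · have hex : ∃ v, d v = 0 := by
          by_contra hno
          push_neg at hno
          apply hnot1
          left
          intro v hdvd
          exact hno v ((hiff0 v).2 (Nat.mod_eq_zero_of_dvd hdvd))
        obtain ⟨v, hv⟩ := hex
        have h1n0 : 1 ≤ n0 := by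
          rw [hn0]
          exact Finset.card_pos.2 ⟨v, Finset.mem_filter.2 ⟨Finset.mem_univ _, hv⟩⟩
        omega
    obtain ⟨T1, T2, hdisjT, hc1, hc2, hsum0⟩ := D2 a n1 n2 (by omega) hn2pos ht0 hmod12
    obtain ⟨f, hfinj, hfsum⟩ := build_injection d a T1 T2 hdisjT (hc1.trans hn1)
      (hc2.trans hn2) (by omega)
    exact ⟨f, hfinj, by rw [hfsum, hsum0]⟩
  · -- n2 = 0, use D1
    have hn2z : n2 = 0 := by omega
    have hno2 : ∀ v : V, ¬ d v = 2 := by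
      intro v hv
      have hmem : v ∈ univ.filter (fun v => d v = 2) :=
        Finset.mem_filter.2 ⟨Finset.mem_univ _, hv⟩
      have : 1 ≤ n2 := by
        rw [hn2]
        exact Finset.card_pos.2 ⟨v, hmem⟩
      omega
    have h3n1 : 3 ∣ n1 := by
      have hz : (n2 : ZMod 3) = 0 := by rw [hn2z, Nat.cast_zero]
      rw [hz, mul_zero, add_zero] at hmod12
      exact (ZMod.natCast_eq_zero_iff _ _).1 hmod12
    have hle : n1 + 2 ≤ n + t := by
      rcases htype with ⟨ht, h2c⟩ | ⟨ht, hnot2, h1c⟩ | ⟨ht, hnot2, hnot1⟩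
      · omega
      · rcases h1c with hall | ⟨w0, hw0, hrest⟩
        · exfalso
          apply hnot2
          left
          intro v
          have hne0 : F.degree v % 3 ≠ 0 := fun h => hall v (Nat.dvd_of_mod_eq_zero h)
          have hne2 : F.degree v % 3 ≠ 2 := fun h => hno2 v ((hiff2 v).2 h)
          omega
        · have h1n0 : 1 ≤ n0 := by
            rw [hn0]
            exact Finset.card_pos.2 ⟨w0, Finset.mem_filter.2 ⟨Finset.mem_univ _,
              (hiff0 w0).2 hw0⟩⟩
          omega
      · have hnot1' := hnot1
        rw [TypeOneCond, not_or] at hnot1'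
        obtain ⟨hA, hB⟩ := hnot1'
        push_neg at hA
        obtain ⟨w0, hw0⟩ := hA
        push_neg at hB
        obtain ⟨w1, hw1ne, hw1⟩ := hB w0 (Nat.mod_eq_zero_of_dvd hw0)
        have hw1z : F.degree w1 % 3 = 0 := by
          have hne2 : F.degree w1 % 3 ≠ 2 := fun h => hno2 w1 ((hiff2 w1).2 h)
          omega
        have hsub : ({w0, w1} : Finset V) ⊆ univ.filter (fun v => d v = 0) := by
          intro x hx
          rcases Finset.mem_insert.1 hx with rfl | hx
          · exact Finset.mem_filter.2 ⟨Finset.mem_univ _, (hiff0 x).2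
              (Nat.mod_eq_zero_of_dvd hw0)⟩
          · rw [Finset.mem_singleton] at hx
            subst hx
            exact Finset.mem_filter.2 ⟨Finset.mem_univ _, (hiff0 x).2 hw1z⟩
        have h2n0 : 2 ≤ n0 := by
          rw [hn0]
          calc 2 = ({w0, w1} : Finset V).card := (Finset.card_pair (Ne.symm hw1ne)).symm
            _ ≤ _ := Finset.card_le_card hsub
        omega
    obtain ⟨T, hTsub, hTcard, hTsum⟩ := D1 a n1 univ h3n1
      (by rw [Finset.card_univ, Fintype.card_fin]; omega)
    obtain ⟨f, hfinj, hfsum⟩ := build_injection d a T ∅ (Finset.disjoint_empty_right T)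
      (hTcard.trans hn1) (by rw [Finset.card_empty]; omega) (by omega)
    refine ⟨f, hfinj, ?_⟩
    rw [hfsum, hTsum, Finset.sum_empty, mul_zero, add_zero]
end

section
/- Let n ≥ 5 and let χ : E(K_n) → Z_3 be an edge-coloring such that there is no 4-cycle uvwz in K_n with χ(uv) + χ(vw) ≠ χ(wz) + χ(zu). Then χ is monochromatic, i.e., all edges of K_n receive the same color. -/
/-!
Two vertex-disjoint edges `uv` and `wz` lie on the two 4-cycles `wuvz` and `uwzv`; subtracting the
two balance conditions gives `2χ(uv) = 2χ(wz)`, and `2` is invertible in `ZMod 3`. So disjoint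
edges get the same color. Two edges sharing a vertex span at most three vertices, so when `n ≥ 5`
there is an edge disjoint from both of them.
-/

open Finset

variable {α G : Type*} [AddCommGroup G]

def FourCycleBalanced (χ : Sym2 α → G) : Prop :=
  ∀ u v w z : α, ([u, v, w, z] : List α).Nodup →
    χ s(u, v) + χ s(v, w) = χ s(w, z) + χ s(z, u)

lemma ZMod.three_add_self_injective : Function.Injective (fun a : ZMod 3 => a + a) := by
  decide

namespace FourCycleBalanced

variable {χ : Sym2 α → G}

lemma eq_of_disjoint [DecidableEq α] (hχ : FourCycleBalanced χ)
    (hG : Function.Injective (fun a : G => a + a)) {u v w z : α} (huv : u ≠ v) (hwz : w ≠ z)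
    (hdisj : Disjoint ({u, v} : Finset α) {w, z}) : χ s(u, v) = χ s(w, z) := by
  obtain ⟨huw, huz⟩ : u ≠ w ∧ u ≠ z := by
    simpa using disjoint_left.mp hdisj (mem_insert_self u {v})
  obtain ⟨hvw, hvz⟩ : v ≠ w ∧ v ≠ z := by
    simpa using disjoint_left.mp hdisj (mem_insert_of_mem (mem_singleton_self v))
  have h₁ := hχ w u v z (by simp [huv, huz, hvz, hwz, huw.symm, hvw.symm])
  have h₂ := hχ u w z v (by simp [huv, huw, huz, hwz, hvw.symm, hvz.symm])
  rw [Sym2.eq_swap (a := w), Sym2.eq_swap (a := z) (b := w)] at h₁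
  rw [Sym2.eq_swap (a := z), Sym2.eq_swap (a := v) (b := u)] at h₂
  apply hG
  calc χ s(u, v) + χ s(u, v)
      = (χ s(u, w) + χ s(u, v)) - (χ s(u, w) + χ s(w, z)) + (χ s(u, v) + χ s(w, z)) := by abel
    _ = (χ s(v, z) + χ s(w, z)) - (χ s(v, z) + χ s(u, v)) + (χ s(u, v) + χ s(w, z)) := by
      rw [h₁, h₂]
    _ = χ s(w, z) + χ s(w, z) := by abel

lemma eq_of_ne [Fintype α] [DecidableEq α] (hα : 5 ≤ Fintype.card α) (hχ : FourCycleBalanced χ)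
    (hG : Function.Injective (fun a : G => a + a)) {u v a b : α} (huv : u ≠ v) (hab : a ≠ b) :
    χ s(u, v) = χ s(a, b) := by
  by_cases hdisj : Disjoint ({u, v} : Finset α) {a, b}
  · exact hχ.eq_of_disjoint hG huv hab hdisj
  have hspan : (({u, v} : Finset α) ∪ {a, b}).card ≤ 3 := by
    have hinter := card_union_add_card_inter ({u, v} : Finset α) {a, b}
    have hmeet : 0 < (({u, v} : Finset α) ∩ {a, b}).card :=
      card_pos.mpr (not_disjoint_iff_nonempty_inter.mp hdisj)
    have := card_le_two (a := u) (b := v)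
    have := card_le_two (a := a) (b := b)
    omega
  obtain ⟨c, hc, d, hd, hcd⟩ := one_lt_card.mp
    (show 1 < (({u, v} : Finset α) ∪ {a, b})ᶜ.card by rw [card_compl]; omega)
  have hcd_disj : ∀ s ⊆ ({u, v} : Finset α) ∪ {a, b}, Disjoint s {c, d} := fun s hs =>
    disjoint_insert_right.mpr ⟨fun h => mem_compl.mp hc (hs h),
      disjoint_singleton_right.mpr fun h => mem_compl.mp hd (hs h)⟩
  rw [hχ.eq_of_disjoint hG huv hcd (hcd_disj _ subset_union_left),
    hχ.eq_of_disjoint hG hab hcd (hcd_disj _ subset_union_right)]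

end FourCycleBalanced

theorem stmt13 (n : ℕ) (hn : 5 ≤ n) (χ : Sym2 (Fin n) → ZMod 3)
    (hcyc : ∀ u v w z : Fin n, ([u, v, w, z] : List (Fin n)).Nodup →
      χ s(u, v) + χ s(v, w) = χ s(w, z) + χ s(z, u)) :
    ∃ m : ZMod 3, ∀ u v : Fin n, u ≠ v → χ s(u, v) = m := by
  have hcard : 5 ≤ Fintype.card (Fin n) := by rwa [Fintype.card_fin]
  have h01 : (⟨0, by omega⟩ : Fin n) ≠ ⟨1, by omega⟩ := by simp [Fin.ext_iff]
  exact ⟨_, fun u v huv =>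
    FourCycleBalanced.eq_of_ne hcard hcyc ZMod.three_add_self_injective huv h01⟩
end

section
/- Let n ≥ 7 and let χ : E(K_n) → Z_3 be an edge-coloring such that there is an alternating 4-cycle C with the property that the complete graph on the vertices outside C is not monochromatic. Then there exist an alternating 4-cycle C', a vertex u ∈ V(C'), and two distinct vertices v, w ∉ V(C') such that χ(uv) ≠ χ(uw). -/
/-!
If the edges inside a vertex set `S` are not all of one colour, then some vertex `p ∈ S` sees two
different colours inside `S`: otherwise every vertex has a single colour on its edges into `S`, and
this colour agrees at the two ends of every edge. On the other hand, replacing either of two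
opposite vertices of an alternating 4-cycle `abcd` by any other vertex `p` gives again an
alternating 4-cycle for at least one of the two choices, since the alternating defects of `pbcd`
and `abpd` add up to that of `abcd`. Applying this to a bichromatic vertex `p` outside the cycle
gives the required cycle through `p`.
-/

open Finset

/-- The 4-cycle `uvwz` is alternating for the coloring `χ`. -/
def IsAltC4 {N : ℕ} (χ : Sym2 (Fin N) → ZMod 3) (u v w z : Fin N) : Prop :=
  ([u, v, w, z] : List (Fin N)).Nodup ∧
    χ s(u, v) + χ s(w, z) ≠ χ s(v, w) + χ s(z, u)

/-- The complete graph on the vertices outside `{a, b, c, d}` is monochromatic. -/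
def MonoOutside {N : ℕ} (χ : Sym2 (Fin N) → ZMod 3) (a b c d : Fin N) : Prop :=
  ∃ m : ZMod 3, ∀ x y : Fin N,
    x ≠ a → x ≠ b → x ≠ c → x ≠ d → y ≠ a → y ≠ b → y ≠ c → y ≠ d → x ≠ y →
      χ s(x, y) = m

section Star

variable {α β : Type*} (χ : Sym2 α → β) (S : Set α)

lemma color_eq_of_forall_star_monochromatic
    (h : ∀ p ∈ S, ∀ q ∈ S, ∀ r ∈ S, p ≠ q → p ≠ r → χ s(p, q) = χ s(p, r))
    {x y x' y' : α} (hx : x ∈ S) (hy : y ∈ S) (hx' : x' ∈ S) (hy' : y' ∈ S)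
    (hxy : x ≠ y) (hxy' : x' ≠ y') : χ s(x, y) = χ s(x', y') := by
  by_cases hxx' : x = x'
  · subst hxx'
    exact h x hx y hy y' hy' hxy hxy'
  calc χ s(x, y) = χ s(x, x') := h x hx y hy x' hx' hxy hxx'
    _ = χ s(x', x) := by rw [Sym2.eq_swap]
    _ = χ s(x', y') := h x' hx' x hx y' hy' (Ne.symm hxx') hxy'

lemma exists_star_ne_of_not_monochromatic [Nonempty β]
    (h : ¬ ∃ m, ∀ x ∈ S, ∀ y ∈ S, x ≠ y → χ s(x, y) = m) :
    ∃ p ∈ S, ∃ q ∈ S, ∃ r ∈ S, p ≠ q ∧ p ≠ r ∧ χ s(p, q) ≠ χ s(p, r) := by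
  contrapose! h
  by_cases hS : ∃ x ∈ S, ∃ y ∈ S, x ≠ y
  · obtain ⟨x, hx, y, hy, hxy⟩ := hS
    exact ⟨χ s(x, y), fun x' hx' y' hy' hxy' =>
      color_eq_of_forall_star_monochromatic χ S h hx' hy' hx hy hxy' hxy⟩
  · push Not at hS
    exact ⟨Classical.arbitrary β, fun x hx y hy hxy => absurd (hS x hx y hy) hxy⟩

end Star

lemma IsAltC4.replace_opposite {N : ℕ} {χ : Sym2 (Fin N) → ZMod 3} {a b c d p : Fin N}
    (h : IsAltC4 χ a b c d) (hpa : p ≠ a) (hpb : p ≠ b) (hpc : p ≠ c) (hpd : p ≠ d) :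
    IsAltC4 χ p b c d ∨ IsAltC4 χ a b p d := by
  obtain ⟨hnd, hdefect⟩ := h
  simp only [List.nodup_cons, List.mem_cons, List.not_mem_nil, List.nodup_nil] at hnd
  by_cases hpbcd : χ s(p, b) + χ s(c, d) = χ s(b, c) + χ s(d, p)
  · refine .inr ⟨by simp_all [Ne.symm hpa, Ne.symm hpb], fun habpd => hdefect ?_⟩
    rw [Sym2.eq_swap (a := b) (b := p)] at habpd
    rw [Sym2.eq_swap (a := d) (b := p)] at hpbcd
    linear_combination hpbcd + habpd
  · exact .inl ⟨by simp_all, hpbcd⟩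

theorem stmt14_general (n : ℕ) (χ : Sym2 (Fin n) → ZMod 3)
    (hC : ∃ a b c d : Fin n, IsAltC4 χ a b c d ∧ ¬ MonoOutside χ a b c d) :
    ∃ a b c d : Fin n, IsAltC4 χ a b c d ∧
      ∃ u : Fin n, (u = a ∨ u = b ∨ u = c ∨ u = d) ∧
        ∃ v w : Fin n,
          v ≠ a ∧ v ≠ b ∧ v ≠ c ∧ v ≠ d ∧
          w ≠ a ∧ w ≠ b ∧ w ≠ c ∧ w ≠ d ∧ v ≠ w ∧
          χ s(u, v) ≠ χ s(u, w) := by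
  obtain ⟨a, b, c, d, hAlt, hMono⟩ := hC
  obtain ⟨p, ⟨hpa, hpb, hpc, hpd⟩, q, ⟨hqa, hqb, hqc, hqd⟩, r, ⟨hra, hrb, hrc, hrd⟩,
      hpq, hpr, hcol⟩ :=
    exists_star_ne_of_not_monochromatic χ {x | x ≠ a ∧ x ≠ b ∧ x ≠ c ∧ x ≠ d}
      fun ⟨m, hm⟩ => hMono ⟨m, fun x y hxa hxb hxc hxd hya hyb hyc hyd hxy =>
        hm x ⟨hxa, hxb, hxc, hxd⟩ y ⟨hya, hyb, hyc, hyd⟩ hxy⟩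
  have hqr : q ≠ r := by
    rintro rfl
    exact hcol rfl
  rcases hAlt.replace_opposite hpa hpb hpc hpd with hAlt' | hAlt'
  · exact ⟨p, b, c, d, hAlt', p, .inl rfl, q, r, hpq.symm, hqb, hqc, hqd,
      hpr.symm, hrb, hrc, hrd, hqr, hcol⟩
  · exact ⟨a, b, p, d, hAlt', p, .inr (.inr (.inl rfl)), q, r, hqa, hqb, hpq.symm, hqd,
      hra, hrb, hpr.symm, hrd, hqr, hcol⟩

theorem stmt14 (n : ℕ) (hn : 7 ≤ n) (χ : Sym2 (Fin n) → ZMod 3)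
    (hC : ∃ a b c d : Fin n, IsAltC4 χ a b c d ∧ ¬ MonoOutside χ a b c d) :
    ∃ a b c d : Fin n, IsAltC4 χ a b c d ∧
      ∃ u : Fin n, (u = a ∨ u = b ∨ u = c ∨ u = d) ∧
        ∃ v w : Fin n,
          v ≠ a ∧ v ≠ b ∧ v ≠ c ∧ v ≠ d ∧
          w ≠ a ∧ w ≠ b ∧ w ≠ c ∧ w ≠ d ∧ v ≠ w ∧
          χ s(u, v) ≠ χ s(u, w) :=
  stmt14_general n χ hC
end

section
/- Let F be a forest on n vertices with 3 dividing e(F) that contains two vertex-disjoint switching structures, the first a (non-generalized) switching structure and the second either a degree-2 generalized switching structure with n ≥ 7, or a degree-3 generalized switching structure with n ≥ 9. Let χ : E(K_n) → Z_3 be an edge-coloring containing an alternating 4-cycle C such that the complete graph on the vertices outside C is not monochromatic. Then there is a copy of F in K_n whose edge colors sum to 0 in Z_3. -/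
open Finset

/-- `(v₁, v₂, v₃, v₄)` is a (non-generalized) switching structure of `F`. -/
def IsSwitchingStructure {V : Type} [Fintype V] [DecidableEq V]
    (F : SimpleGraph V) [DecidableRel F.Adj] (v₁ v₂ v₃ v₄ : V) : Prop :=
  ([v₁, v₂, v₃, v₄] : List V).Nodup ∧
    ((F.Adj v₁ v₂ ∧ F.Adj v₂ v₃ ∧ F.Adj v₃ v₄ ∧ F.degree v₂ = 2 ∧ F.degree v₃ = 2) ∨
      (F.Adj v₁ v₂ ∧ F.degree v₂ = 1 ∧ F.Adj v₄ v₃ ∧ F.degree v₃ = 1))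

/-- `(l, u)` is a degree-2 generalized switching structure of `F`: `u` has degree 2
and is either adjacent to the leaf `l`, or adjacent to the parent of the leaf `l`. -/
def IsGenSwitch2 {V : Type} [Fintype V] [DecidableEq V]
    (F : SimpleGraph V) [DecidableRel F.Adj] (l u : V) : Prop :=
  l ≠ u ∧ F.degree u = 2 ∧ F.degree l = 1 ∧
    (F.Adj u l ∨ ∃ p : V, F.Adj u p ∧ F.Adj p l)

/-- `(l, u, v, w)` is a degree-3 generalized switching structure of `F`: `u` has
degree 3 with neighbors `v`, `w`, and either the leaf `l`, or a third neighbor which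
is the parent of the leaf `l`. -/
def IsGenSwitch3 {V : Type} [Fintype V] [DecidableEq V]
    (F : SimpleGraph V) [DecidableRel F.Adj] (l u v w : V) : Prop :=
  ([l, u, v, w] : List V).Nodup ∧ F.degree u = 3 ∧ F.degree l = 1 ∧
    F.Adj u v ∧ F.Adj u w ∧
    (F.Adj u l ∨ ∃ p : V, p ≠ v ∧ p ≠ w ∧ F.Adj u p ∧ F.Adj p l)

/-! Swapping the middle vertices `v₂, v₃` of a switching structure changes the colour sum of
an embedding by the `switchGain` of the images of `v₁ v₂ v₃ v₄`; swapping the leaf `l` with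
`u` in a generalized switching structure changes it by `∑ z, (χ(lz) - χ(uz))` over the
neighbours `z` of `u` off the path to `l`. Placing the switching structure on the alternating
4-cycle makes the first change `δ` nonzero, and a non-monochromatic pattern outside the cycle
makes the second change `γ` nonzero. The structures are disjoint, so performing neither, one or
both swaps gives the sums `s, s + δ, s + γ, s + δ + γ`, and one of them vanishes in `ZMod 3`. -/

open Equiv SimpleGraph

section EdgeSum

variable {V α M : Type*} [Fintype V] [DecidableEq V] [AddCommGroup M]

def edgeSum (F : SimpleGraph V) [DecidableRel F.Adj] (c : Sym2 α → M) (f : V → α) : M :=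
  ∑ e ∈ F.edgeFinset, c (e.map f)

variable {F : SimpleGraph V} [DecidableRel F.Adj] (c : Sym2 α → M)

theorem SimpleGraph.sum_incidenceFinset (g : Sym2 V → M) (x : V) :
    ∑ e ∈ F.incidenceFinset x, g e = ∑ z ∈ F.neighborFinset x, g s(x, z) := by
  have : F.incidenceFinset x = (F.neighborFinset x).image (s(x, ·)) := by
    ext e
    induction e using Sym2.ind with
    | _ p q =>
      simp only [mem_incidenceFinset, incidenceSet, Set.mem_sep_iff, mem_edgeSet, Sym2.mem_iff,
        Finset.mem_image, mem_neighborFinset, Sym2.eq_iff]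
      constructor
      · rintro ⟨h, rfl | rfl⟩
        exacts [⟨q, h, .inl ⟨rfl, rfl⟩⟩, ⟨p, h.symm, .inr ⟨rfl, rfl⟩⟩]
      · rintro ⟨z, h, ⟨rfl, rfl⟩ | ⟨rfl, rfl⟩⟩
        exacts [⟨h, .inl rfl⟩, ⟨h.symm, .inr rfl⟩]
  rw [this, Finset.sum_image fun _ _ _ _ h => Sym2.congr_right.1 h]

theorem SimpleGraph.sum_edgeFinset_eq_of_eq_zero_of_mem_iff_mem (D : Sym2 V → M) {x y : V}
    (hD : ∀ e, (x ∈ e ↔ y ∈ e) → D e = 0) :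
    ∑ e ∈ F.edgeFinset, D e =
      ∑ z ∈ (F.neighborFinset x).erase y, D s(x, z)
        + ∑ z ∈ (F.neighborFinset y).erase x, D s(y, z) := by
  have hxy : D s(x, y) = 0 := hD _ (by simp)
  have hsupp : ∑ e ∈ F.edgeFinset, D e = ∑ e ∈ F.incidenceFinset x ∪ F.incidenceFinset y, D e := by
    rw [incidenceFinset_eq_filter, incidenceFinset_eq_filter, ← Finset.filter_or,
      Finset.sum_filter_of_ne]
    intro e _ he
    by_contra! h
    exact he (hD e (iff_of_false h.1 h.2))
  have hinter : ∑ e ∈ F.incidenceFinset x ∩ F.incidenceFinset y, D e = 0 :=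
    Finset.sum_eq_zero fun e he => by
      simp only [Finset.mem_inter, mem_incidenceFinset, incidenceSet, Set.mem_sep_iff] at he
      exact hD e (iff_of_true he.1.2 he.2.2)
  have hunion := Finset.sum_union_inter (f := D) (s₁ := F.incidenceFinset x)
    (s₂ := F.incidenceFinset y)
  rw [hinter, add_zero, ← hsupp, sum_incidenceFinset, sum_incidenceFinset] at hunion
  rw [hunion, Finset.sum_erase (F.neighborFinset x) (f := fun z => D s(x, z)) hxy,
    Finset.sum_erase (F.neighborFinset y) (f := fun z => D s(y, z)) (Sym2.eq_swap ▸ hxy)]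

theorem edgeSum_comp_swap (f : V → α) (x y : V) :
    edgeSum F c (f ∘ swap x y) = edgeSum F c f
      + ∑ z ∈ (F.neighborFinset x).erase y, (c s(f y, f z) - c s(f x, f z))
      + ∑ z ∈ (F.neighborFinset y).erase x, (c s(f x, f z) - c s(f y, f z)) := by
  set D : Sym2 V → M := fun e => c (e.map (f ∘ swap x y)) - c (e.map f)
  have hD : ∀ e, (x ∈ e ↔ y ∈ e) → D e = 0 := by
    intro e he
    by_cases hx : x ∈ e
    · rcases eq_or_ne x y with rfl | hxy
      · simp [D]
      rw [(Sym2.mem_and_mem_iff hxy).1 ⟨hx, he.1 hx⟩]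
      simp [D, Sym2.eq_swap]
    · refine sub_eq_zero.2 (congrArg c (Sym2.map_congr fun z hz => ?_))
      rw [Function.comp_apply, swap_apply_of_ne_of_ne (ne_of_mem_of_not_mem hz hx)
        (ne_of_mem_of_not_mem hz (mt he.2 hx))]
  have hx : ∀ z ∈ (F.neighborFinset x).erase y, D s(x, z) = c s(f y, f z) - c s(f x, f z) := by
    intro z hz
    obtain ⟨hzy, hz⟩ := Finset.mem_erase.1 hz
    simp [D, swap_apply_of_ne_of_ne ((mem_neighborFinset _ _ _).1 hz).ne' hzy]
  have hy : ∀ z ∈ (F.neighborFinset y).erase x, D s(y, z) = c s(f x, f z) - c s(f y, f z) := by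
    intro z hz
    obtain ⟨hzx, hz⟩ := Finset.mem_erase.1 hz
    simp [D, swap_apply_of_ne_of_ne hzx ((mem_neighborFinset _ _ _).1 hz).ne']
  rw [add_assoc, ← Finset.sum_congr rfl hx, ← Finset.sum_congr rfl hy,
    ← sum_edgeFinset_eq_of_eq_zero_of_mem_iff_mem D hD, edgeSum, edgeSum,
    ← Finset.sum_add_distrib]
  exact Finset.sum_congr rfl fun e _ => by simp [D]

theorem edgeSum_comp_swap_of_neighborFinset_eq {l u q : V} (hl : F.neighborFinset l = {q})
    (hq : q = u ∨ F.Adj u q) (f : V → α) :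
    edgeSum F c (f ∘ swap l u) = edgeSum F c f
      + ∑ z ∈ ((F.neighborFinset u).erase l).erase q, (c s(f l, f z) - c s(f u, f z)) := by
  have hlq : F.Adj l q := (F.mem_neighborFinset l q).1 (hl ▸ Finset.mem_singleton_self q)
  rw [edgeSum_comp_swap, hl]
  rcases hq with rfl | hq
  · rw [Finset.erase_singleton, Finset.sum_empty, add_zero,
      Finset.erase_eq_of_notMem (s := (F.neighborFinset q).erase l) (a := q) (by simp)]
  · have hql : q ∈ (F.neighborFinset u).erase l :=
      Finset.mem_erase.2 ⟨hlq.ne', (F.mem_neighborFinset _ _).2 hq⟩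
    rw [Finset.erase_eq_of_notMem (by simpa using hq.ne), Finset.sum_singleton,
      ← Finset.add_sum_erase _ _ hql]
    abel

end EdgeSum

section Neighbors

variable {V : Type} [Fintype V] {F : SimpleGraph V} [DecidableRel F.Adj]

theorem SimpleGraph.neighborFinset_eq_of_subset_of_degree_le {u : V} {s : Finset V}
    (hs : s ⊆ F.neighborFinset u) (h : F.degree u ≤ s.card) : F.neighborFinset u = s :=
  (Finset.eq_of_subset_of_card_le hs (by rwa [card_neighborFinset_eq_degree])).symm

theorem SimpleGraph.neighborFinset_eq_singleton {u a : V} (hu : F.degree u = 1) (ha : F.Adj u a) :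
    F.neighborFinset u = {a} :=
  neighborFinset_eq_of_subset_of_degree_le (by simpa using ha) (by simp [hu])

variable [DecidableEq V]

theorem SimpleGraph.neighborFinset_eq_pair {u a b : V} (hu : F.degree u = 2) (ha : F.Adj u a)
    (hb : F.Adj u b) (hab : a ≠ b) : F.neighborFinset u = {a, b} :=
  neighborFinset_eq_of_subset_of_degree_le (by simp [Finset.insert_subset_iff, ha, hb])
    (by simp [hu, hab])

theorem IsSwitchingStructure.erase_neighborFinset {v₁ v₂ v₃ v₄ : V}
    (h : IsSwitchingStructure F v₁ v₂ v₃ v₄) :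
    (F.neighborFinset v₂).erase v₃ = {v₁} ∧ (F.neighborFinset v₃).erase v₂ = {v₄} := by
  obtain ⟨hnd, ⟨h₁₂, h₂₃, h₃₄, hd₂, hd₃⟩ | ⟨h₁₂, hd₂, h₄₃, hd₃⟩⟩ := h
  all_goals
    simp only [List.nodup_cons, List.mem_cons, List.not_mem_nil, or_false, not_or,
      List.nodup_nil, and_true] at hnd
    obtain ⟨⟨-, h₁₃, -⟩, ⟨-, h₂₄⟩, -⟩ := hnd
  · rw [neighborFinset_eq_pair hd₂ h₁₂.symm h₂₃ h₁₃, neighborFinset_eq_pair hd₃ h₂₃.symm h₃₄ h₂₄]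
    simp [Finset.erase_insert_of_ne h₁₃, h₂₄]
  · rw [neighborFinset_eq_singleton hd₂ h₁₂.symm, neighborFinset_eq_singleton hd₃ h₄₃.symm]
    simp [Ne.symm h₁₃, h₂₄]

theorem IsSwitchingStructure.mem_of_adj {v₁ v₂ v₃ v₄ : V}
    (h : IsSwitchingStructure F v₁ v₂ v₃ v₄) {z : V}
    (hz : F.Adj v₂ z ∨ F.Adj v₃ z) : z ∈ [v₁, v₂, v₃, v₄] := by
  obtain ⟨h₂, h₃⟩ := h.erase_neighborFinset
  rcases hz with hz | hz
  · by_cases hz₃ : z = v₃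
    · simp [hz₃]
    · have : z ∈ (F.neighborFinset v₂).erase v₃ := by simp [hz₃, hz]
      simp_all
  · by_cases hz₂ : z = v₂
    · simp [hz₂]
    · have : z ∈ (F.neighborFinset v₃).erase v₂ := by simp [hz₂, hz]
      simp_all

end Neighbors

section Structures

variable {V : Type} {α M : Type*} [Fintype V] [DecidableEq V] [AddCommGroup M]
  {F : SimpleGraph V} [DecidableRel F.Adj]

/-- The change of the colour sum when the path `w x y z` is rerouted as `w y x z`. -/
def switchGain (c : Sym2 α → M) (w x y z : α) : M :=
  c s(w, y) + c s(x, z) - c s(w, x) - c s(y, z)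

theorem switchGain_rev (c : Sym2 α → M) (w x y z : α) :
    switchGain c z y x w = switchGain c w x y z := by
  rw [switchGain, switchGain, Sym2.eq_swap (a := z) (b := x), Sym2.eq_swap (a := y) (b := w),
    Sym2.eq_swap (a := z) (b := y), Sym2.eq_swap (a := x) (b := w)]
  abel

theorem IsSwitchingStructure.edgeSum_comp_swap {v₁ v₂ v₃ v₄ : V}
    (h : IsSwitchingStructure F v₁ v₂ v₃ v₄) (c : Sym2 α → M) (f : V → α) :
    edgeSum F c (f ∘ swap v₂ v₃) = edgeSum F c f + switchGain c (f v₁) (f v₂) (f v₃) (f v₄) := by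
  obtain ⟨h₂, h₃⟩ := h.erase_neighborFinset
  rw [_root_.edgeSum_comp_swap, h₂, h₃, Finset.sum_singleton, Finset.sum_singleton, switchGain,
    Sym2.eq_swap (a := f v₃), Sym2.eq_swap (a := f v₂) (b := f v₁)]
  abel

theorem card_erase_erase_neighborFinset {l u q : V} (hl : F.neighborFinset l = {q})
    (hq : q = u ∨ F.Adj u q) :
    (((F.neighborFinset u).erase l).erase q).card = F.degree u - 1 := by
  have hlq : F.Adj l q := (F.mem_neighborFinset l q).1 (hl ▸ Finset.mem_singleton_self q)
  rcases hq with rfl | hq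
  · rw [Finset.erase_eq_of_notMem (by simp), Finset.card_erase_of_mem (by simpa using hlq.symm),
      card_neighborFinset_eq_degree]
  · have hl : l ∉ F.neighborFinset u := by
      intro hul
      have hlu : u ∈ F.neighborFinset l := by simpa using ((F.mem_neighborFinset _ _).1 hul).symm
      rw [hl, Finset.mem_singleton] at hlu
      exact hq.ne hlu
    rw [Finset.erase_eq_of_notMem hl, Finset.card_erase_of_mem (by simpa using hq),
      card_neighborFinset_eq_degree]

theorem IsGenSwitch2.exists_edgeSum_comp_swap {l u : V} (h : IsGenSwitch2 F l u) :
    ∃ t, F.Adj u t ∧ t ≠ l ∧ ∀ (c : Sym2 α → M) (f : V → α),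
      edgeSum F c (f ∘ swap l u) = edgeSum F c f + (c s(f l, f t) - c s(f u, f t)) := by
  obtain ⟨-, hu, hl, hul | ⟨p, hup, hpl⟩⟩ := h
  all_goals
    obtain ⟨q, hlq, hq⟩ : ∃ q, F.neighborFinset l = {q} ∧ (q = u ∨ F.Adj u q) := by
      first
        | exact ⟨u, neighborFinset_eq_singleton hl hul.symm, .inl rfl⟩
        | exact ⟨p, neighborFinset_eq_singleton hl hpl.symm, .inr hup⟩
    obtain ⟨t, ht⟩ := Finset.card_eq_one.1 ((card_erase_erase_neighborFinset hlq hq).trans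
      (by rw [hu]))
    have htS : t ∈ ((F.neighborFinset u).erase l).erase q := ht ▸ Finset.mem_singleton_self t
    simp only [Finset.mem_erase, mem_neighborFinset] at htS
    refine ⟨t, htS.2.2, htS.2.1, fun c f => ?_⟩
    rw [edgeSum_comp_swap_of_neighborFinset_eq c hlq hq, ht, Finset.sum_singleton]

theorem IsGenSwitch3.edgeSum_comp_swap {l u v w : V} (h : IsGenSwitch3 F l u v w)
    (c : Sym2 α → M) (f : V → α) :
    edgeSum F c (f ∘ swap l u) = edgeSum F c f
      + (c s(f l, f v) - c s(f u, f v) + (c s(f l, f w) - c s(f u, f w))) := by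
  obtain ⟨hnd, hu, hl, huv, huw, hul | ⟨p, hpv, hpw, hup, hpl⟩⟩ := h
  all_goals
    simp only [List.nodup_cons, List.mem_cons, List.not_mem_nil, or_false, not_or,
      List.nodup_nil, and_true] at hnd
    obtain ⟨⟨-, hlv, hlw⟩, -, hvw, -⟩ := hnd
    obtain ⟨q, hlq, hq, hvq, hwq⟩ : ∃ q, F.neighborFinset l = {q} ∧ (q = u ∨ F.Adj u q) ∧
        v ≠ q ∧ w ≠ q := by
      first
        | exact ⟨u, neighborFinset_eq_singleton hl hul.symm, .inl rfl, huv.ne', huw.ne'⟩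
        | exact ⟨p, neighborFinset_eq_singleton hl hpl.symm, .inr hup, hpv.symm, hpw.symm⟩
    have hS : ((F.neighborFinset u).erase l).erase q = {v, w} := by
      refine (Finset.eq_of_subset_of_card_le ?_ ?_).symm
      · simp [Finset.insert_subset_iff, huv, huw, hvq, hwq, Ne.symm hlv, Ne.symm hlw]
      · rw [card_erase_erase_neighborFinset hlq hq, hu, Finset.card_pair hvw]
    rw [edgeSum_comp_swap_of_neighborFinset_eq c hlq hq, hS, Finset.sum_pair hvw]

end Structures

section Colorings

variable {α M : Type*}

theorem exists_ne_of_not_const [Nonempty M] {s : Set α} {c : Sym2 α → M}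
    (h : ¬ ∃ m, ∀ x ∈ s, ∀ y ∈ s, x ≠ y → c s(x, y) = m) :
    ∃ p ∈ s, ∃ x ∈ s, ∃ y ∈ s, p ≠ x ∧ p ≠ y ∧ c s(p, x) ≠ c s(p, y) := by
  push Not at h
  obtain ⟨x₀, hx₀, y₀, hy₀, hxy₀, -⟩ := h (Classical.arbitrary M)
  obtain ⟨x₁, hx₁, y₁, hy₁, hxy₁, hne⟩ := h (c s(x₀, y₀))
  by_contra! H
  apply hne
  by_cases h : x₁ = y₀
  · subst h
    rw [H x₁ hx₁ y₁ hy₁ x₀ hx₀ hxy₁ hxy₀.symm, Sym2.eq_swap]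
  · rw [H x₁ hx₁ y₁ hy₁ y₀ hy₀ hxy₁ h, Sym2.eq_swap, H y₀ hy₀ x₁ hx₁ x₀ hx₀ (Ne.symm h)
      hxy₀.symm, Sym2.eq_swap]

/-- Otherwise the equations for `{z, t} = {p, t₁}, {p, t₂}, {t₁, t₂}` give
`2 c(xp) = 2 c(yp)`, and `2` is a unit in `ZMod 3`. -/
theorem exists_add_ne_add_of_ne [DecidableEq α] {s : Finset α} (hs : 5 ≤ s.card)
    {c : Sym2 α → ZMod 3} {p x y : α} (hp : p ∈ s) (hpx : p ≠ x) (hpy : p ≠ y)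
    (hne : c s(p, x) ≠ c s(p, y)) :
    ∃ z ∈ s, ∃ t ∈ s, [x, y, z, t].Nodup ∧ c s(x, z) + c s(x, t) ≠ c s(y, z) + c s(y, t) := by
  have hxy : x ≠ y := by rintro rfl; exact hne rfl
  obtain ⟨t₁, ht₁, t₂, ht₂, ht⟩ := Finset.one_lt_card.1 <| show 1 < (s \ {p, x, y}).card by
    have := Finset.le_card_sdiff {p, x, y} s
    have := Finset.card_le_three (a := p) (b := x) (c := y)
    omega
  simp only [Finset.mem_sdiff, Finset.mem_insert, Finset.mem_singleton, not_or] at ht₁ ht₂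
  by_contra! H
  have e₁ := H p hp t₁ ht₁.1 (by simp; grind)
  have e₂ := H p hp t₂ ht₂.1 (by simp; grind)
  have e₃ := H t₁ ht₁.1 t₂ ht₂.1 (by simp; grind)
  have two_mul_inj : ∀ a b : ZMod 3, a + a = b + b → a = b := by decide
  refine hne (two_mul_inj _ _ ?_)
  rw [Sym2.eq_swap (a := p), Sym2.eq_swap (a := p)]
  linear_combination e₁ + e₂ - e₃

end Colorings

theorem exists_injective_map_eq {α β : Type*} [Fintype α] [Fintype β] [DecidableEq β]
    (h : Fintype.card α ≤ Fintype.card β) {L : List α} {M : List β} (hL : L.Nodup)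
    (hM : M.Nodup) (hLM : L.length = M.length) :
    ∃ g : α → β, Function.Injective g ∧ L.map g = M := by
  induction L generalizing M with
  | nil =>
    obtain rfl := List.length_eq_zero_iff.1 hLM.symm
    obtain ⟨g⟩ := Function.Embedding.nonempty_of_card_le h
    exact ⟨g, g.injective, rfl⟩
  | cons a L ih =>
    obtain _ | ⟨m, M⟩ := M
    · simp at hLM
    obtain ⟨haL, hL⟩ := List.nodup_cons.1 hL
    obtain ⟨hmM, hM⟩ := List.nodup_cons.1 hM
    obtain ⟨g, hg, rfl⟩ := ih hL hM (by simpa using hLM)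
    refine ⟨swap (g a) m ∘ g, (swap _ _).injective.comp hg, ?_⟩
    rw [List.map_cons, Function.comp_apply, swap_apply_left]
    refine congrArg _ (List.map_congr_left fun z hz => ?_)
    exact swap_apply_of_ne_of_ne (hg.ne (ne_of_mem_of_not_mem hz haL))
      (ne_of_mem_of_not_mem (List.mem_map_of_mem hz) hmM)

theorem ZMod.three_eq_zero_or_add_eq_zero (s δ γ : ZMod 3) (hδ : δ ≠ 0) (hγ : γ ≠ 0) :
    s = 0 ∨ s + δ = 0 ∨ s + γ = 0 ∨ s + δ + γ = 0 := by
  revert s δ γ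
  decide

section ZeroSumCopy

variable {V : Type} [Fintype V] [DecidableEq V] {F : SimpleGraph V} [DecidableRel F.Adj]
  {n : ℕ} {χ : Sym2 (Fin n) → ZMod 3}

theorem hasZeroSumCopy_of_perms {f : V → Fin n} (hf : Function.Injective f) (σ τ : Perm V)
    {δ γ : ZMod 3} (hδ : δ ≠ 0) (hγ : γ ≠ 0)
    (hσ : edgeSum F χ (f ∘ σ) = edgeSum F χ f + δ) (hτ : edgeSum F χ (f ∘ τ) = edgeSum F χ f + γ)
    (hστ : edgeSum F χ ((f ∘ σ) ∘ τ) = edgeSum F χ (f ∘ σ) + γ) : HasZeroSumCopy F χ := by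
  rcases ZMod.three_eq_zero_or_add_eq_zero (edgeSum F χ f) δ γ hδ hγ with h | h | h | h
  · exact ⟨f, hf, h⟩
  · exact ⟨f ∘ σ, hf.comp σ.injective, hσ.trans h⟩
  · exact ⟨f ∘ τ, hf.comp τ.injective, hτ.trans h⟩
  · exact ⟨(f ∘ σ) ∘ τ, (hf.comp σ.injective).comp τ.injective, hστ.trans (by rw [hσ]; exact h)⟩

end ZeroSumCopy

section AltC4

variable {N : ℕ} {χ : Sym2 (Fin N) → ZMod 3} {a b c d : Fin N}

theorem IsAltC4.switchGain_ne_zero (h : IsAltC4 χ a b c d) : switchGain χ a b d c ≠ 0 := by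
  intro h0
  apply h.2
  rw [switchGain, Sym2.eq_swap (a := d) (b := c), Sym2.eq_swap (a := a) (b := d)] at h0
  linear_combination -h0

/-- The gains of the two placements `p a c b` and `p c a d` add up to minus the gain of the
alternating cycle, so one of them is nonzero. -/
theorem IsAltC4.exists_switchGain_ne_zero (h : IsAltC4 χ a b c d) (p : Fin N) :
    ∃ q r s, [q, r, s] ⊆ [a, b, c, d] ∧ [q, r, s].Nodup ∧ switchGain χ p q r s ≠ 0 := by
  have hnd := h.1
  simp only [List.nodup_cons, List.mem_cons, List.not_mem_nil, or_false, not_or,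
    List.nodup_nil, and_true] at hnd
  have hsum : switchGain χ p a c b + switchGain χ p c a d = -switchGain χ a b d c := by
    simp only [switchGain, Sym2.eq_swap (a := c) (b := b), Sym2.eq_swap (a := d) (b := c),
      Sym2.eq_swap (a := a) (b := d)]
    ring
  by_cases h₀ : switchGain χ p a c b = 0
  · refine ⟨c, a, d, by simp, by simp; grind, fun h₁ => ?_⟩
    exact h.switchGain_ne_zero (neg_eq_zero.1 (by rw [← hsum, h₀, h₁, add_zero]))
  · exact ⟨a, c, b, by simp, by simp; grind, h₀⟩

end AltC4

section Main

variable {V : Type} [Fintype V] [DecidableEq V] {F : SimpleGraph V} [DecidableRel F.Adj]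
  {n : ℕ} {χ : Sym2 (Fin n) → ZMod 3} {a b c d : Fin n}

theorem exists_ne_outside_of_not_monoOutside (h : ¬ MonoOutside χ a b c d) :
    ∃ p ∉ [a, b, c, d], ∃ x ∉ [a, b, c, d], ∃ y ∉ [a, b, c, d],
      p ≠ x ∧ p ≠ y ∧ χ s(p, x) ≠ χ s(p, y) := by
  have := exists_ne_of_not_const (s := {z | z ∉ [a, b, c, d]}) (c := χ) <| by
    simpa [MonoOutside, and_imp] using h
  simpa using this

theorem hasZeroSumCopy_of_isSwitchingStructure {v₁ v₂ v₃ v₄ : V}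
    (hsw : IsSwitchingStructure F v₁ v₂ v₃ v₄) {τ : Perm V} {γ : (V → Fin n) → ZMod 3}
    (hτ : ∀ g, edgeSum F χ (g ∘ τ) = edgeSum F χ g + γ g) {f : V → Fin n}
    (hf : Function.Injective f) (hδ : switchGain χ (f v₁) (f v₂) (f v₃) (f v₄) ≠ 0)
    (hγ : γ f ≠ 0) (hγσ : γ (f ∘ swap v₂ v₃) = γ f) : HasZeroSumCopy F χ :=
  hasZeroSumCopy_of_perms hf (swap v₂ v₃) τ hδ hγ (hsw.edgeSum_comp_swap χ f) (hτ f)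
    (by rw [hτ, hγσ])

theorem IsAltC4.exists_injective_switchGain_ne_zero (halt : IsAltC4 χ a b c d)
    (hcard : Fintype.card V ≤ n) {v₁ v₂ v₃ v₄ l u t : V} (hv : [v₁, v₂, v₃, v₄].Nodup)
    (hlut : [l, u, t].Nodup) (hl : l ∉ [v₁, v₂, v₃, v₄]) (hu : u ∉ [v₁, v₂, v₃, v₄])
    (ht₂ : t ≠ v₂) (ht₃ : t ≠ v₃) {x y p : Fin n} (hxyp : [x, y, p].Nodup)
    (hout : [x, y, p].Disjoint [a, b, c, d]) :
    ∃ f : V → Fin n, Function.Injective f ∧ f l = x ∧ f u = y ∧ f t = p ∧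
      switchGain χ (f v₁) (f v₂) (f v₃) (f v₄) ≠ 0 := by
  wlog ht₄ : t ≠ v₄ generalizing v₁ v₂ v₃ v₄
  · obtain rfl : t = v₄ := not_not.1 ht₄
    obtain ⟨f, hf, hfl, hfu, hft, hδ⟩ := this (List.nodup_reverse.2 hv)
      (by simpa [or_comm, or_left_comm] using hl) (by simpa [or_comm, or_left_comm] using hu)
      ht₃ ht₂ (by rintro rfl; simp at hv)
    exact ⟨f, hf, hfl, hfu, hft, by rwa [switchGain_rev]⟩
  have hcard' : Fintype.card V ≤ Fintype.card (Fin n) := by simpa using hcard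
  by_cases ht₁ : t = v₁
  · -- `v₁ = t` goes outside the cycle, so `v₂ v₃ v₄` get three of its vertices
    subst ht₁
    obtain ⟨q, r, s, hqrs, hqrs', hgain⟩ := halt.exists_switchGain_ne_zero p
    have hlut_out : [l, u, t].Disjoint [v₂, v₃, v₄] := List.disjoint_left.2 (by simp_all)
    obtain ⟨f, hf, hfL⟩ := exists_injective_map_eq hcard' (L := [l, u, t] ++ [v₂, v₃, v₄])
      (M := [x, y, p] ++ [q, r, s]) (hlut.append hv.of_cons hlut_out)
      (hxyp.append hqrs' (List.disjoint_of_subset_right hqrs hout)) rfl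
    simp only [List.cons_append, List.nil_append, List.map_cons, List.map_nil, List.cons.injEq,
      and_true] at hfL
    exact ⟨f, hf, hfL.1, hfL.2.1, hfL.2.2.1, by simpa [hfL] using hgain⟩
  · have hlut_out : [l, u, t].Disjoint [v₁, v₂, v₃, v₄] :=
      List.disjoint_left.2 (by simp_all)
    obtain ⟨f, hf, hfL⟩ := exists_injective_map_eq hcard' (L := [l, u, t] ++ [v₁, v₂, v₃, v₄])
      (M := [x, y, p] ++ [a, b, d, c]) (hlut.append hv hlut_out)
      (hxyp.append (halt.1.perm (((List.Perm.swap d c []).cons b).cons a))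
        (List.disjoint_of_subset_right (by simp) hout)) rfl
    simp only [List.cons_append, List.nil_append, List.map_cons, List.map_nil, List.cons.injEq,
      and_true] at hfL
    exact ⟨f, hf, hfL.1, hfL.2.1, hfL.2.2.1, by simpa [hfL] using halt.switchGain_ne_zero⟩

theorem hasZeroSumCopy_of_isGenSwitch2 (hcard : Fintype.card V = n) {v₁ v₂ v₃ v₄ l u : V}
    (hsw : IsSwitchingStructure F v₁ v₂ v₃ v₄) (h : IsGenSwitch2 F l u)
    (hl : l ∉ [v₁, v₂, v₃, v₄]) (hu : u ∉ [v₁, v₂, v₃, v₄]) (halt : IsAltC4 χ a b c d)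
    (hmono : ¬ MonoOutside χ a b c d) : HasZeroSumCopy F χ := by
  obtain ⟨t, hut, htl, hγ⟩ := h.exists_edgeSum_comp_swap (α := Fin n) (M := ZMod 3)
  obtain ⟨p, hp, x, hx, y, hy, hpx, hpy, hne⟩ := exists_ne_outside_of_not_monoOutside hmono
  have hxy : x ≠ y := by rintro rfl; exact hne rfl
  have ht₂ : t ≠ v₂ := fun ht => hu (hsw.mem_of_adj (.inl (ht ▸ hut.symm)))
  have ht₃ : t ≠ v₃ := fun ht => hu (hsw.mem_of_adj (.inr (ht ▸ hut.symm)))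
  obtain ⟨f, hf, hfl, hfu, hft, hδ⟩ := halt.exists_injective_switchGain_ne_zero (x := x)
    (y := y) (p := p) hcard.le hsw.1 (by simp [h.1, htl.symm, hut.ne]) hl hu ht₂ ht₃
    (by simp [hxy, hpx.symm, hpy.symm]) (List.disjoint_left.2 (by simp_all))
  have hfix : ∀ z, z ≠ v₂ → z ≠ v₃ → (f ∘ swap v₂ v₃) z = f z := fun z h₂ h₃ => by
    simp [swap_apply_of_ne_of_ne h₂ h₃]
  refine hasZeroSumCopy_of_isSwitchingStructure hsw (hγ χ) hf hδ ?_ ?_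
  · rw [hfl, hfu, hft, sub_ne_zero, Sym2.eq_swap, Sym2.eq_swap (a := y)]
    exact hne
  · rw [hfix t ht₂ ht₃, hfix l (by rintro rfl; simp at hl) (by rintro rfl; simp at hl),
      hfix u (by rintro rfl; simp at hu) (by rintro rfl; simp at hu)]

theorem hasZeroSumCopy_of_isGenSwitch3 (hcard : Fintype.card V = n) (hn : 9 ≤ n)
    {v₁ v₂ v₃ v₄ l u v w : V} (hsw : IsSwitchingStructure F v₁ v₂ v₃ v₄)
    (h : IsGenSwitch3 F l u v w)
    (hdisj : ∀ x ∈ [l, u, v, w], ∀ y ∈ [v₁, v₂, v₃, v₄], x ≠ y) (halt : IsAltC4 χ a b c d)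
    (hmono : ¬ MonoOutside χ a b c d) : HasZeroSumCopy F χ := by
  obtain ⟨p, hp, x, hx, y, hy, hpx, hpy, hne⟩ := exists_ne_outside_of_not_monoOutside hmono
  set O : Finset (Fin n) := Finset.univ \ [a, b, c, d].toFinset with hO
  have hOcard : 5 ≤ O.card := by
    have := List.toFinset_card_le [a, b, c, d]
    rw [hO, Finset.card_univ_sdiff, Fintype.card_fin]
    simp only [List.length_cons, List.length_nil] at this
    omega
  obtain ⟨z, hz, t, ht, hxyzt, hgain⟩ :=
    exists_add_ne_add_of_ne hOcard (by simpa [O] using hp) hpx hpy hne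
  have hout : [x, y, z, t].Disjoint [a, b, c, d] :=
    List.disjoint_left.2 (by simp_all [O])
  obtain ⟨f, hf, hfL⟩ := exists_injective_map_eq (by simp [hcard])
    (L := [l, u, v, w] ++ [v₁, v₂, v₃, v₄])
    (M := [x, y, z, t] ++ [a, b, d, c])
    (h.1.append hsw.1 (List.disjoint_left.2 fun z hz hz' => hdisj z hz z hz' rfl))
    (hxyzt.append (halt.1.perm (((List.Perm.swap d c []).cons b).cons a))
      (List.disjoint_of_subset_right (by simp) hout)) rfl
  simp only [List.cons_append, List.nil_append, List.map_cons, List.map_nil, List.cons.injEq,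
    and_true] at hfL
  obtain ⟨hfl, hfu, hfv, hfw, hfv₁, hfv₂, hfv₃, hfv₄⟩ := hfL
  have hfix : ∀ z ∈ [l, u, v, w], (f ∘ swap v₂ v₃) z = f z := fun z hz => by
    simp [swap_apply_of_ne_of_ne (hdisj z hz v₂ (by simp)) (hdisj z hz v₃ (by simp))]
  refine hasZeroSumCopy_of_isSwitchingStructure hsw (h.edgeSum_comp_swap χ) hf
    (by simpa [hfv₁, hfv₂, hfv₃, hfv₄] using halt.switchGain_ne_zero) ?_ ?_
  · rw [hfl, hfu, hfv, hfw]
    exact fun h0 => hgain (by linear_combination h0)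
  · rw [hfix l (by simp), hfix u (by simp), hfix v (by simp), hfix w (by simp)]

end Main

theorem stmt15_general {V : Type} [Fintype V] [DecidableEq V]
    (F : SimpleGraph V) [DecidableRel F.Adj] (n : ℕ)
    (hcard : Fintype.card V = n)
    (hstruct : ∃ v₁ v₂ v₃ v₄ : V, IsSwitchingStructure F v₁ v₂ v₃ v₄ ∧
      ((7 ≤ n ∧ ∃ l u : V, IsGenSwitch2 F l u ∧
          l ≠ v₁ ∧ l ≠ v₂ ∧ l ≠ v₃ ∧ l ≠ v₄ ∧
          u ≠ v₁ ∧ u ≠ v₂ ∧ u ≠ v₃ ∧ u ≠ v₄) ∨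
        (9 ≤ n ∧ ∃ l u v w : V, IsGenSwitch3 F l u v w ∧
          ∀ x ∈ ([l, u, v, w] : List V), ∀ y ∈ ([v₁, v₂, v₃, v₄] : List V), x ≠ y)))
    (χ : Sym2 (Fin n) → ZMod 3)
    (hC : ∃ a b c d : Fin n, IsAltC4 χ a b c d ∧ ¬ MonoOutside χ a b c d) :
    HasZeroSumCopy F χ := by
  obtain ⟨v₁, v₂, v₃, v₄, hsw, ⟨-, l, u, h, hl₁, hl₂, hl₃, hl₄, hu₁, hu₂, hu₃, hu₄⟩ |
    ⟨hn, l, u, v, w, h, hdisj⟩⟩ := hstruct <;>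
  obtain ⟨a, b, c, d, halt, hmono⟩ := hC
  · exact hasZeroSumCopy_of_isGenSwitch2 hcard hsw h (by simp [hl₁, hl₂, hl₃, hl₄])
      (by simp [hu₁, hu₂, hu₃, hu₄]) halt hmono
  · exact hasZeroSumCopy_of_isGenSwitch3 hcard hn hsw h hdisj halt hmono

theorem stmt15 {V : Type} [Fintype V] [DecidableEq V]
    (F : SimpleGraph V) [DecidableRel F.Adj] (n : ℕ)
    (hcard : Fintype.card V = n)
    (hforest : F.IsAcyclic)
    (hdiv : 3 ∣ F.edgeFinset.card)
    (hstruct : ∃ v₁ v₂ v₃ v₄ : V, IsSwitchingStructure F v₁ v₂ v₃ v₄ ∧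
      ((7 ≤ n ∧ ∃ l u : V, IsGenSwitch2 F l u ∧
          l ≠ v₁ ∧ l ≠ v₂ ∧ l ≠ v₃ ∧ l ≠ v₄ ∧
          u ≠ v₁ ∧ u ≠ v₂ ∧ u ≠ v₃ ∧ u ≠ v₄) ∨
        (9 ≤ n ∧ ∃ l u v w : V, IsGenSwitch3 F l u v w ∧
          ∀ x ∈ ([l, u, v, w] : List V), ∀ y ∈ ([v₁, v₂, v₃, v₄] : List V), x ≠ y)))
    (χ : Sym2 (Fin n) → ZMod 3)
    (hC : ∃ a b c d : Fin n, IsAltC4 χ a b c d ∧ ¬ MonoOutside χ a b c d) :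
    HasZeroSumCopy F χ :=
  stmt15_general F n hcard hstruct χ hC
end

section
/- Let F be a forest containing a vertex u adjacent to at least five leaves l_1, …, l_5, let v be a vertex of F distinct from u and from these five leaves, and let F' be the forest obtained from F by deleting the edges ul_1, ul_2, ul_3 and adding the edges vl_1, vl_2, vl_3. If an edge-coloring χ : E(K_m) → Z_3 admits a copy of F whose edge colors sum to 0 in Z_3, then χ also admits a copy of F' whose edge colors sum to 0 in Z_3. -/
open Finset

/-! Let `f` be a zero-sum copy of `F`, and let `dᵢ = χ(f v, f lᵢ) - χ(f u, f lᵢ)` be the change of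
weight when the leaf `lᵢ` is moved from `u` to `v`. By the Erdős–Ginzburg–Ziv theorem for `ℤ/3`,
three of the five `dᵢ` sum to zero. Permuting the leaves at `u` is an automorphism of `F`; composing
`f` with the permutation that brings those three leaves to `l₀, l₁, l₂` gives a zero-sum copy
of `F'`. -/

theorem exists_perm_sum_three_eq_zero (d : Fin 5 → ZMod 3) :
    ∃ π : Equiv.Perm (Fin 5), d (π 0) + d (π 1) + d (π 2) = 0 := by
  obtain ⟨t, -, ht, hsum⟩ := ZMod.erdos_ginzburg_ziv (s := univ) d (by simp)
  obtain ⟨e, rfl⟩ : ∃ e : Fin 3 ↪ Fin 5, univ.map e = t :=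
    Function.Embedding.exists_of_card_eq_finset (by simp [ht])
  obtain ⟨π, hπ⟩ := Equiv.Perm.exists_extending_pair (Fin.castLE (by norm_num)) e
    (Fin.castLE_injective _) e.injective
  refine ⟨π, ?_⟩
  rw [← hsum, sum_map, Fin.sum_univ_three, ← hπ, ← hπ, ← hπ]
  rfl

namespace SimpleGraph

variable {V W X M : Type*} [AddCommGroup M]

theorem Iso.sum_edgeFinset_map_comp {G : SimpleGraph V} {H : SimpleGraph W}
    [Fintype G.edgeSet] [Fintype H.edgeSet] (σ : G ≃g H) (g : W → X) (χ : Sym2 X → M) :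
    ∑ e ∈ G.edgeFinset, χ (e.map (g ∘ σ)) = ∑ e ∈ H.edgeFinset, χ (e.map g) := by
  refine sum_nbij' (Sym2.map σ) (Sym2.map σ.symm) ?_ ?_ ?_ ?_ ?_
  · intro e; induction e using Sym2.ind; simpa using σ.map_adj_iff.mpr
  · intro e; induction e using Sym2.ind; simpa using σ.symm.map_adj_iff.mpr
  · intro e _; simp [Sym2.map_map]
  · intro e _; simp [Sym2.map_map]
  · intro e _; simp [Sym2.map_map]

theorem adj_iff_eq_of_degree_eq_one {G : SimpleGraph V} [Fintype V] [DecidableRel G.Adj]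
    {v w x : V}
    (hv : G.degree v = 1) (hvw : G.Adj v w) : G.Adj v x ↔ x = w := by
  obtain ⟨y, -, hy⟩ := degree_eq_one_iff_existsUnique_adj.mp hv
  exact ⟨fun hx => (hy x hx).trans (hy w hvw).symm, fun h => h ▸ hvw⟩

theorem adj_viaEmbedding_iff {ι : Type*} [Fintype ι] {G : SimpleGraph V} {u : V} (l : ι ↪ V)
    (hl : ∀ i x, G.Adj (l i) x ↔ x = u) (π : Equiv.Perm ι) (x y : V) :
    G.Adj (π.viaEmbedding l x) (π.viaEmbedding l y) ↔ G.Adj x y := by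
  set σ := π.viaEmbedding l
  have hu : u ∉ Set.range l := by
    rintro ⟨i, rfl⟩; exact G.irrefl ((hl i _).mpr rfl)
  have hσu : σ u = u := π.viaEmbedding_apply_of_notMem l u hu
  have key : ∀ i z, G.Adj (σ (l i)) (σ z) ↔ G.Adj (l i) z := by
    intro i z
    rw [π.viaEmbedding_apply, hl, hl, σ.injective.eq_iff' hσu]
  by_cases hx : x ∈ Set.range l
  · obtain ⟨i, rfl⟩ := hx; exact key i y
  by_cases hy : y ∈ Set.range l
  · obtain ⟨j, rfl⟩ := hy; rw [G.adj_comm, key, G.adj_comm]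
  rw [π.viaEmbedding_apply_of_notMem l x hx, π.viaEmbedding_apply_of_notMem l y hy]

theorem sum_edgeFinset_of_reattach {ι : Type*} [Fintype V] {F F' : SimpleGraph V}
    [DecidableRel F.Adj] [DecidableRel F'.Adj] {u v : V} {l : ι → V} {S : Finset ι}
    (hl : Function.Injective l) (hu : ∀ i ∈ S, F.Adj u (l i)) (hv : ∀ i ∈ S, ¬ F.Adj v (l i))
    (hF' : ∀ x y, F'.Adj x y ↔
      (F.Adj x y ∧ ∀ i ∈ S, s(x, y) ≠ s(u, l i)) ∨ ∃ i ∈ S, s(x, y) = s(v, l i))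
    (g : V → X) (χ : Sym2 X → M) :
    ∑ e ∈ F'.edgeFinset, χ (e.map g) = ∑ e ∈ F.edgeFinset, χ (e.map g) +
      ∑ i ∈ S, (χ s(g v, g (l i)) - χ s(g u, g (l i))) := by
  classical
  set L := S.image fun i => s(u, l i)
  set C := S.image fun i => s(v, l i)
  have hE : F'.edgeFinset = (F.edgeFinset \ L) ∪ C := by
    ext e; induction e using Sym2.ind
    simp [L, C, hF', eq_comm]
  have hLF : L ⊆ F.edgeFinset := by
    intro e he; obtain ⟨i, hi, rfl⟩ := mem_image.mp he; simpa using hu i hi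
  have hCF : Disjoint (F.edgeFinset \ L) C := by
    refine Finset.disjoint_left.mpr fun e he heC => ?_
    obtain ⟨i, hi, rfl⟩ := mem_image.mp heC
    exact hv i hi (by simpa using (mem_sdiff.mp he).1)
  rw [hE, sum_union hCF, sum_sdiff_eq_sub hLF, sum_image, sum_image, sum_sub_distrib]
  · simp only [Sym2.map_mk]; abel
  all_goals intro i _ j _ h; exact hl (Sym2.congr_right.mp h)

end SimpleGraph

theorem stmt16_general {V : Type} [Fintype V] [DecidableEq V]
    (F F' : SimpleGraph V) [DecidableRel F.Adj] [DecidableRel F'.Adj]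
    (u v : V) (l : Fin 5 → V)
    (hinj : Function.Injective l)
    (hlv : ∀ i, l i ≠ v) (huv : u ≠ v)
    (hleaf : ∀ i, F.degree (l i) = 1)
    (hadj : ∀ i, F.Adj u (l i))
    -- `F'` is obtained from `F` by deleting the edges `u lᵢ` and
    -- adding the edges `v lᵢ`, for `i = 0, 1, 2`.
    (hF' : ∀ x y : V, F'.Adj x y ↔
      ((F.Adj x y ∧ s(x, y) ≠ s(u, l 0) ∧ s(x, y) ≠ s(u, l 1) ∧ s(x, y) ≠ s(u, l 2)) ∨
        s(x, y) = s(v, l 0) ∨ s(x, y) = s(v, l 1) ∨ s(x, y) = s(v, l 2)))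
    {m : ℕ} (χ : Sym2 (Fin m) → ZMod 3)
    (h : HasZeroSumCopy F χ) :
    HasZeroSumCopy F' χ := by
  obtain ⟨f, hf, hsum⟩ := h
  have hnbr : ∀ i x, F.Adj (l i) x ↔ x = u := fun i x =>
    SimpleGraph.adj_iff_eq_of_degree_eq_one (hleaf i) (hadj i).symm
  obtain ⟨π, hπ⟩ := exists_perm_sum_three_eq_zero
    fun i => χ s(f v, f (l i)) - χ s(f u, f (l i))
  let σ : F ≃g F := ⟨π.viaEmbedding ⟨l, hinj⟩, SimpleGraph.adj_viaEmbedding_iff _ hnbr π _ _⟩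
  have hσl : ∀ i, σ (l i) = l (π i) := π.viaEmbedding_apply ⟨l, hinj⟩
  have hσ : ∀ x, (∀ i, l i ≠ x) → σ x = x := fun x hx =>
    π.viaEmbedding_apply_of_notMem ⟨l, hinj⟩ x (by rintro ⟨i, hi⟩; exact hx i hi)
  have hσu : σ u = u := hσ u fun i => (hadj i).ne'
  have hσv : σ v = v := hσ v hlv
  refine ⟨f ∘ σ, hf.comp σ.injective, ?_⟩
  rw [SimpleGraph.sum_edgeFinset_of_reattach (S := {0, 1, 2}) hinj (fun i _ => hadj i)
    (fun i _ hvi => huv ((hnbr i v).mp hvi.symm).symm) (by simpa using hF'),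
    σ.sum_edgeFinset_map_comp, hsum, zero_add, Finset.sum_insert (by decide), Finset.sum_pair (by decide)]
  simp only [Function.comp_apply, hσl, hσu, hσv]
  linear_combination hπ

theorem stmt16 {V : Type} [Fintype V] [DecidableEq V]
    (F F' : SimpleGraph V) [DecidableRel F.Adj] [DecidableRel F'.Adj]
    (hforest : F.IsAcyclic)
    (u v : V) (l : Fin 5 → V)
    (hinj : Function.Injective l)
    (hlu : ∀ i, l i ≠ u) (hlv : ∀ i, l i ≠ v) (huv : u ≠ v)
    (hleaf : ∀ i, F.degree (l i) = 1)
    (hadj : ∀ i, F.Adj u (l i))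
    -- `F'` is obtained from `F` by deleting the edges `u lᵢ` and
    -- adding the edges `v lᵢ`, for `i = 0, 1, 2`.
    (hF' : ∀ x y : V, F'.Adj x y ↔
      ((F.Adj x y ∧ s(x, y) ≠ s(u, l 0) ∧ s(x, y) ≠ s(u, l 1) ∧ s(x, y) ≠ s(u, l 2)) ∨
        s(x, y) = s(v, l 0) ∨ s(x, y) = s(v, l 1) ∨ s(x, y) = s(v, l 2)))
    {m : ℕ} (χ : Sym2 (Fin m) → ZMod 3)
    (h : HasZeroSumCopy F χ) :
    HasZeroSumCopy F' χ :=
  stmt16_general F F' u v l hinj hlv huv hleaf hadj hF' χ h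
end

section
/- Let m ≥ 6 be an integer with 3 dividing m, and let A = (a_1, …, a_m) be a sequence of elements of Z_3 such that a_1 + ⋯ + a_m = 0. Then either A is a constant sequence, or for every c ∈ Z_3 there exist pairwise distinct indices i, j, k ∈ {1, …, m} such that a_i + a_j + a_k = c. -/
/-!
If `a` takes all three values of `ℤ/3`, then `0 = 0 + 1 + 2` is a sum over distinct indices, and
for `c ≠ 0` some value `w` is taken twice (pigeonhole, as `m > 3`) while `c - 2w ≠ w`, so
`c = w + w + (c - 2w)`. If `a` takes exactly two values `x ≠ y`, then
`0 = ∑ (a i - x) = #{i | a i = y} • (y - x)` together with `3 ∣ m` forces both values to be taken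
a multiple of three times, hence at least three times, and the three sums `3x`, `2x + y`, `x + 2y`
already exhaust `ℤ/3`.
-/

open Finset

section Fibers

variable {ι α : Type*} [Fintype ι] [DecidableEq α] (a : ι → α)

lemma exists_ne_of_two_le_card_fiber {x : α} (h : 2 ≤ #{i | a i = x}) :
    ∃ i j, i ≠ j ∧ a i = x ∧ a j = x := by
  obtain ⟨i, hi, j, hj, hij⟩ := one_lt_card.mp h
  simp only [mem_filter, mem_univ, true_and] at hi hj
  exact ⟨i, j, hij, hi, hj⟩

lemma exists_pairwise_ne_of_three_le_card_fiber {x : α} (h : 3 ≤ #{i | a i = x}) :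
    ∃ i j k, i ≠ j ∧ i ≠ k ∧ j ≠ k ∧ a i = x ∧ a j = x ∧ a k = x := by
  obtain ⟨i, hi, j, hj, k, hk, hij, hik, hjk⟩ := two_lt_card.mp h
  simp only [mem_filter, mem_univ, true_and] at hi hj hk
  exact ⟨i, j, k, hij, hik, hjk, hi, hj, hk⟩

end Fibers

lemma ZMod.dvd_card_fiber_of_sum_eq_zero {p : ℕ} [Fact p.Prime] {ι : Type*} [Fintype ι]
    (hp : p ∣ Fintype.card ι) (a : ι → ZMod p) (hsum : ∑ i, a i = 0) {x y : ZMod p}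
    (hxy : x ≠ y) (hval : ∀ i, a i = x ∨ a i = y) : p ∣ #{i | a i = y} := by
  have hshift : ∀ i, a i - x = (if a i = y then 1 else 0) * (y - x) := fun i => by
    rcases hval i with h | h <;> simp [h, hxy]
  have hcard_zero : (Fintype.card ι : ZMod p) = 0 := (ZMod.natCast_eq_zero_iff _ p).mpr hp
  have hcard : (#{i | a i = y} : ZMod p) * (y - x) = 0 := calc
    _ = ∑ i, (if a i = y then 1 else 0) * (y - x) := by rw [← sum_mul, sum_boole]
    _ = ∑ i, (a i - x) := sum_congr rfl fun i _ => (hshift i).symm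
    _ = 0 := by simp [sum_sub_distrib, hsum, hcard_zero]
  exact (ZMod.natCast_eq_zero_iff _ p).mp <|
    (mul_eq_zero.mp hcard).resolve_right (sub_ne_zero.mpr hxy.symm)

namespace ZMod

lemma eq_or_eq_or_eq_of_pairwise_ne {x y z : ZMod 3} (hxy : x ≠ y) (hxz : x ≠ z) (hyz : y ≠ z)
    (w : ZMod 3) : w = x ∨ w = y ∨ w = z := by
  revert x y z w; decide

lemma add_add_self_eq_zero (w : ZMod 3) : w + w + w = 0 := by
  revert w; decide

lemma eq_or_eq_or_eq_of_ne {x y : ZMod 3} (hxy : x ≠ y) (c : ZMod 3) :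
    c = x + x + x ∨ c = x + x + y ∨ c = x + y + y := by
  revert x y c; decide

end ZMod

section TripleSums

variable {ι : Type*} [Fintype ι]

lemma exists_triple_sum_of_surjective (hcard : 3 < Fintype.card ι) (a : ι → ZMod 3)
    (ha : Function.Surjective a) (c : ZMod 3) :
    ∃ i j k, i ≠ j ∧ i ≠ k ∧ j ≠ k ∧ a i + a j + a k = c := by
  by_cases hc : c = 0
  · obtain ⟨i, hi⟩ := ha 0
    obtain ⟨j, hj⟩ := ha 1
    obtain ⟨k, hk⟩ := ha 2
    exact ⟨i, j, k, ne_of_apply_ne a (by rw [hi, hj]; decide),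
      ne_of_apply_ne a (by rw [hi, hk]; decide), ne_of_apply_ne a (by rw [hj, hk]; decide),
      by rw [hi, hj, hk, hc]; decide⟩
  · obtain ⟨w, hw⟩ := Fintype.exists_lt_card_fiber_of_mul_lt_card a (n := 1) (by simpa using hcard)
    obtain ⟨i, j, hij, hi, hj⟩ := exists_ne_of_two_le_card_fiber a hw
    obtain ⟨k, hk⟩ := ha (c - w - w)
    have hkw : a k ≠ w := fun h => hc <| by
      rw [← ZMod.add_add_self_eq_zero w]; linear_combination h - hk
    refine ⟨i, j, k, hij, ne_of_apply_ne a ?_, ne_of_apply_ne a ?_, ?_⟩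
    · rw [hi]; exact hkw.symm
    · rw [hj]; exact hkw.symm
    · rw [hi, hj, hk]; ring

lemma exists_triple_sum_of_two_values (hdvd : 3 ∣ Fintype.card ι) (a : ι → ZMod 3)
    (hsum : ∑ i, a i = 0) {p q : ι} (hpq : a p ≠ a q) (hval : ∀ i, a i = a p ∨ a i = a q)
    (c : ZMod 3) : ∃ i j k, i ≠ j ∧ i ≠ k ∧ j ≠ k ∧ a i + a j + a k = c := by
  have hp : 3 ≤ #{i | a i = a p} := Nat.le_of_dvd (card_pos.mpr ⟨p, by simp⟩) <|
    ZMod.dvd_card_fiber_of_sum_eq_zero hdvd a hsum hpq.symm fun i => (hval i).symm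
  have hq : 3 ≤ #{i | a i = a q} := Nat.le_of_dvd (card_pos.mpr ⟨q, by simp⟩) <|
    ZMod.dvd_card_fiber_of_sum_eq_zero hdvd a hsum hpq hval
  rcases ZMod.eq_or_eq_or_eq_of_ne hpq c with rfl | rfl | rfl
  · obtain ⟨i, j, k, hij, hik, hjk, hi, hj, hk⟩ := exists_pairwise_ne_of_three_le_card_fiber a hp
    exact ⟨i, j, k, hij, hik, hjk, by rw [hi, hj, hk]⟩
  · obtain ⟨i, j, hij, hi, hj⟩ := exists_ne_of_two_le_card_fiber a (x := a p) (by omega)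
    exact ⟨i, j, q, hij, ne_of_apply_ne a (hi ▸ hpq), ne_of_apply_ne a (hj ▸ hpq),
      by rw [hi, hj]⟩
  · obtain ⟨j, k, hjk, hj, hk⟩ := exists_ne_of_two_le_card_fiber a (x := a q) (by omega)
    exact ⟨p, j, k, ne_of_apply_ne a (hj ▸ hpq), ne_of_apply_ne a (hk ▸ hpq), hjk,
      by rw [hj, hk, add_assoc]⟩

end TripleSums

theorem stmt19 (m : ℕ) (hm : 6 ≤ m) (hdvd : 3 ∣ m)
    (a : Fin m → ZMod 3) (hsum : ∑ i, a i = 0) :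
    (∀ i j : Fin m, a i = a j) ∨
    (∀ c : ZMod 3, ∃ i j k : Fin m, i ≠ j ∧ i ≠ k ∧ j ≠ k ∧ a i + a j + a k = c) := by
  by_cases hconst : ∀ i j, a i = a j
  · exact .inl hconst
  obtain ⟨p, q, hpq⟩ : ∃ p q, a p ≠ a q := by simpa using hconst
  refine .inr fun c => ?_
  by_cases hsurj : Function.Surjective a
  · exact exists_triple_sum_of_surjective (by rw [Fintype.card_fin]; omega) a hsurj c
  · obtain ⟨z, hz⟩ := not_forall.mp hsurj
    have hval : ∀ i, a i = a p ∨ a i = a q := fun i => by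
      rcases ZMod.eq_or_eq_or_eq_of_pairwise_ne hpq (fun h => hz ⟨p, h⟩) (fun h => hz ⟨q, h⟩)
        (a i) with h | h | h
      exacts [.inl h, .inr h, (hz ⟨i, h⟩).elim]
    exact exists_triple_sum_of_two_values (by rwa [Fintype.card_fin]) a hsum hpq hval c
end
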